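/- arXiv:1311.4382 — 5 statements merged into one kernel-verified Lean document; each statement's English description precedes it below -/
import Mathlib

section
/- For every n ≥ 1, the number 2/(n(n+1)) * binomial(4n+1, n-1) is a positive integer. -/
/-!
With `N = 4n + 1`, applying `C(N, j + 1) (j + 1) = C(N, j) (N - j)` twice gives
`C(N, n + 1) n (n + 1) = C(N, n - 1) (3n + 2)(3n + 1) = C(N, n - 1) (9 n (n + 1) + 2)`,
so the quotient is the positive integer `C(4n + 1, n + 1) - 9 C(4n + 1, n - 1)`.
-/

theorem Nat.choose_add_two_mul (N m : ℕ) :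
    N.choose (m + 2) * ((m + 1) * (m + 2)) = N.choose m * ((N - m) * (N - (m + 1))) :=
  calc N.choose (m + 2) * ((m + 1) * (m + 2))
      = N.choose (m + 2) * (m + 2) * (m + 1) := by ring
    _ = N.choose (m + 1) * (m + 1) * (N - (m + 1)) := by
        rw [Nat.choose_succ_right_eq]; ring
    _ = N.choose m * ((N - m) * (N - (m + 1))) := by
        rw [Nat.choose_succ_right_eq]; ring

theorem choose_four_mul_add_five_mul (m : ℕ) :
    (4 * m + 5).choose (m + 2) * ((m + 1) * (m + 2))
      = (9 * ((m + 1) * (m + 2)) + 2) * (4 * m + 5).choose m := by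
  rw [Nat.choose_add_two_mul, show 4 * m + 5 - m = 3 * m + 5 by omega,
    show 4 * m + 5 - (m + 1) = 3 * m + 4 by omega]
  ring

theorem two_mul_choose_four_mul_add_five (m : ℕ) :
    2 * (4 * m + 5).choose m
      = ((4 * m + 5).choose (m + 2) - 9 * (4 * m + 5).choose m) * ((m + 1) * (m + 2)) := by
  rw [Nat.sub_mul, choose_four_mul_add_five_mul, add_mul, mul_right_comm, mul_comm 9]
  omega

/-- For every `n ≥ 1`, the number `2/(n(n+1)) * C(4n+1, n-1)` is a positive integer. -/
theorem chapoton_formula_integral (n : ℕ) (hn : 1 ≤ n) :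
    ∃ k : ℕ, 0 < k ∧ 2 * Nat.choose (4 * n + 1) (n - 1) = k * (n * (n + 1)) := by
  obtain ⟨m, rfl⟩ : ∃ m, n = m + 1 := ⟨n - 1, by omega⟩
  have hdiv := two_mul_choose_four_mul_add_five m
  refine ⟨(4 * m + 5).choose (m + 2) - 9 * (4 * m + 5).choose m,
    Nat.pos_of_ne_zero fun hzero => ?_, ?_⟩
  · rw [hzero, zero_mul, mul_eq_zero] at hdiv
    exact (Nat.choose_pos (by omega)).ne' (hdiv.resolve_left two_ne_zero)
  · rw [show 4 * (m + 1) + 1 = 4 * m + 5 by ring, Nat.add_sub_cancel, hdiv]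
end

section
/- For every m ≥ 1 and n ≥ 1, the number (m+1)/(n(mn+1)) * binomial((m+1)^2·n + m, n-1) is a positive integer. -/
/-!
Write `N = (m+1)²n + m` and `C = C(N, n-1)`. The two standard identities
`n · C(N, n) = (N - n + 1) · C` and `(N + 1) · C = (N + 2 - n) · C(N + 1, n - 1)`
give `n ∣ (N - n + 1) C` and `N + 2 - n ∣ (N + 1) C`. For this particular `N` we have
`N - n + 1 ≡ m + 1 (mod n)`, `N + 2 - n = (m + 2)(mn + 1)` and `N + 1 ≡ (m + 1) n (mod mn + 1)`,
so `n ∣ (m + 1) C` and `mn + 1 ∣ n (m + 1) C`. As `n` and `mn + 1` are coprime,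
`n (mn + 1) ∣ (m + 1) C`.
-/

namespace Nat

theorem succ_dvd_sub_mul_choose (N k : ℕ) : k + 1 ∣ (N - k) * N.choose k :=
  ⟨N.choose (k + 1), by rw [mul_comm, ← choose_succ_right_eq, mul_comm]⟩

theorem succ_sub_dvd_succ_mul_choose (N k : ℕ) : N + 1 - k ∣ (N + 1) * N.choose k :=
  ⟨(N + 1).choose k, by rw [mul_comm, choose_mul_succ_eq, mul_comm]⟩

theorem dvd_mul_of_dvd_add_mul {a q r x : ℕ} (h : a ∣ (a * q + r) * x) : a ∣ r * x := by
  rw [add_mul, mul_assoc] at h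
  exact (Nat.dvd_add_right (dvd_mul_right a _)).mp h

end Nat

section MTamari

open Nat

variable (m k : ℕ)

theorem succ_dvd_mul_choose_mTamari :
    k + 1 ∣ (m + 1) * ((m + 1) ^ 2 * (k + 1) + m).choose k := by
  have hsub : (m + 1) ^ 2 * (k + 1) + m - k = (k + 1) * (m * (m + 2)) + (m + 1) := by
    rw [show (m + 1) ^ 2 * (k + 1) + m = (k + 1) * (m * (m + 2)) + (m + 1) + k by ring,
      Nat.add_sub_cancel]
  have h := succ_dvd_sub_mul_choose ((m + 1) ^ 2 * (k + 1) + m) k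
  rw [hsub] at h
  exact dvd_mul_of_dvd_add_mul h

theorem mul_succ_add_one_dvd_mul_choose_mTamari :
    m * (k + 1) + 1 ∣ (m + 1) * ((m + 1) ^ 2 * (k + 1) + m).choose k := by
  set N := (m + 1) ^ 2 * (k + 1) + m with hN
  have hsub : N + 1 - k = (m * (k + 1) + 1) * (m + 2) := by
    rw [show N + 1 = (m * (k + 1) + 1) * (m + 2) + k by rw [hN]; ring, Nat.add_sub_cancel]
  have hdvd : m * (k + 1) + 1 ∣ (N + 1) * N.choose k :=
    (dvd_mul_right _ _).trans (hsub ▸ succ_sub_dvd_succ_mul_choose N k)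
  rw [show N + 1 = (m * (k + 1) + 1) * (m + 1) + (k + 1) * (m + 1) by rw [hN]; ring] at hdvd
  have hcop : Coprime (m * (k + 1) + 1) (k + 1) :=
    (coprime_mul_right_add_left 1 (k + 1) m).mpr (coprime_one_left _)
  exact hcop.dvd_of_dvd_mul_left (mul_assoc (k + 1) _ _ ▸ dvd_mul_of_dvd_add_mul hdvd)

theorem mul_dvd_mul_choose_mTamari :
    (k + 1) * (m * (k + 1) + 1) ∣ (m + 1) * ((m + 1) ^ 2 * (k + 1) + m).choose k :=
  Coprime.mul_dvd_of_dvd_of_dvd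
    ((coprime_mul_right_add_right (k + 1) 1 m).mpr (coprime_one_right _))
    (succ_dvd_mul_choose_mTamari m k) (mul_succ_add_one_dvd_mul_choose_mTamari m k)

end MTamari

theorem m_tamari_formula_integral_general (m n : ℕ) (hn : 1 ≤ n) :
    ∃ k : ℕ, 0 < k ∧
      (m + 1) * Nat.choose ((m + 1) ^ 2 * n + m) (n - 1) = k * (n * (m * n + 1)) := by
  obtain ⟨p, rfl⟩ : ∃ p, n = p + 1 := ⟨n - 1, by omega⟩
  obtain ⟨k, hk⟩ := mul_dvd_mul_choose_mTamari m p
  have hpos : 0 < (m + 1) * ((m + 1) ^ 2 * (p + 1) + m).choose p :=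
    Nat.mul_pos m.succ_pos (Nat.choose_pos
      ((p.le_succ.trans (Nat.le_mul_of_pos_left _ (by positivity))).trans (Nat.le_add_right _ _)))
  refine ⟨k, Nat.pos_of_mul_pos_left (hk ▸ hpos), ?_⟩
  rw [Nat.add_sub_cancel, hk, mul_comm]

/-- For every `m ≥ 1` and `n ≥ 1`, the number
`(m+1)/(n(mn+1)) * C((m+1)^2·n + m, n-1)` is a positive integer. -/
theorem m_tamari_formula_integral (m n : ℕ) (hm : 1 ≤ m) (hn : 1 ≤ n) :
    ∃ k : ℕ, 0 < k ∧
      (m + 1) * Nat.choose ((m + 1) ^ 2 * n + m) (n - 1) = k * (n * (m * n + 1)) :=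
  m_tamari_formula_integral_general m n hn
end

section
/- A finite poset on {1,...,n} is an interval-poset (i.e., arises from an interval of the Tamari lattice) if and only if for all a < b < c: a ≺ c implies b ≺ c, and c ≺ a implies b ≺ a. -/
open Tree

/-- One right rotation somewhere in a binary tree: `y(x(A,B),C) → x(A,y(B,C))`. -/
inductive RightRot : Tree Unit → Tree Unit → Prop
  | root (A B C : Tree Unit) :
      RightRot (node () (node () A B) C) (node () A (node () B C))
  | left {A A' : Tree Unit} (B : Tree Unit) :
      RightRot A A' → RightRot (node () A B) (node () A' B)
  | right (A : Tree Unit) {B B' : Tree Unit} :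
      RightRot B B' → RightRot (node () A B) (node () A B')

/-- The Tamari order on binary trees. -/
def tamariLE : Tree Unit → Tree Unit → Prop := Relation.ReflTransGen RightRot

/-- Decreasing relations of the binary-search-tree labelling of a binary tree:
`decRelT T b a` iff, labelling internal nodes in in-order by `1,…,n`, the node
`b` lies in the right subtree of the node `a` (so `b > a` and `b ≺ a`). -/
def decRelT : Tree Unit → ℕ → ℕ → Prop
  | BinaryTree.nil, _, _ => False
  | BinaryTree.node _ A B, i, j =>
      let p := A.numNodes + 1
      (i < p ∧ j < p ∧ decRelT A i j) ∨
      (p < i ∧ p < j ∧ decRelT B (i - p) (j - p)) ∨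
      (j = p ∧ p < i ∧ i ≤ p + B.numNodes)

/-- Increasing relations of the binary-search-tree labelling of a binary tree:
`incRelT T a c` iff the node `a` lies in the left subtree of the node `c`
(so `a < c` and `a ≺ c`). -/
def incRelT : Tree Unit → ℕ → ℕ → Prop
  | BinaryTree.nil, _, _ => False
  | BinaryTree.node _ A B, i, j =>
      let p := A.numNodes + 1
      (i < p ∧ j < p ∧ incRelT A i j) ∨
      (p < i ∧ p < j ∧ incRelT B (i - p) (j - p)) ∨
      (j = p ∧ 1 ≤ i ∧ i < p)

/-- A relation on `{1,…,n}` (as `Fin n`) is an interval-poset relation: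
a partial order such that for `a < b < c`, `a ≺ c` implies `b ≺ c` and
`c ≺ a` implies `b ≺ a`. -/
def IsIntervalRel (n : ℕ) (r : Fin n → Fin n → Prop) : Prop :=
  (∀ a, r a a) ∧
  (∀ a b, r a b → r b a → a = b) ∧
  (∀ a b c, r a b → r b c → r a c) ∧
  (∀ a b c : Fin n, a < b → b < c → r a c → r b c) ∧
  (∀ a b c : Fin n, a < b → b < c → r c a → r b a)

/-!
Label the nodes of a binary tree `1, …, n` in in-order. The decreasing relations of a tree are
exactly the relations `D` on `1, …, n` with `j < i` whenever `D i j` that are transitive and convex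
(`D c a` and `a < b < c` give `D b a`), and they determine the tree: its root is the leftmost node
whose right branch reaches `n`, and both sides are recovered recursively. The same holds,
mirrored, for increasing relations.

The Tamari order is inclusion of decreasing relations. A right rotation changes the largest
label of only one subtree, and increases it; conversely, when the decreasing relations of `T` are
among those of `U`, rotating `T` at the first node whose subtree ends earlier than in `U` keeps it
below `U` and brings these right ends closer to those of `U`.

If `T₁ ≤ T₂`, the decreasing relations of `T₁` together with the increasing relations of `T₂`
already form a transitive relation, since no node lies in the left subtree of one of the nodes
of its own right subtree; so the generated poset is this union plus the diagonal, and it has the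
closure property. Conversely, an interval-poset splits into a decreasing and an increasing part,
realised by unique trees `T₁` and `T₂`, and `T₁ ≤ T₂` because a decreasing relation of `T₁`
missing from `T₂` would close a cycle with an increasing relation of `T₂`.
-/

open Relation

section TreeRelations

variable {T : BinaryTree Unit} {i j k : ℕ}

theorem decRelT_bounds (h : decRelT T i j) : 1 ≤ j ∧ j < i ∧ i ≤ T.numNodes := by
  induction T generalizing i j with
  | nil => exact h.elim
  | node _ A B ihA ihB =>
    simp only [decRelT, BinaryTree.numNodes] at h ⊢
    rcases h with ⟨-, -, h⟩ | ⟨-, -, h⟩ | ⟨rfl, h⟩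
    · have := ihA h; omega
    · have := ihB h; omega
    · omega

theorem incRelT_bounds (h : incRelT T i j) : 1 ≤ i ∧ i < j ∧ j ≤ T.numNodes := by
  induction T generalizing i j with
  | nil => exact h.elim
  | node _ A B ihA ihB =>
    simp only [incRelT, BinaryTree.numNodes] at h ⊢
    rcases h with ⟨-, -, h⟩ | ⟨-, -, h⟩ | ⟨rfl, h⟩
    · have := ihA h; omega
    · have := ihB h; omega
    · omega

theorem decRelT_trans (hij : decRelT T i j) (hjk : decRelT T j k) : decRelT T i k := by
  induction T generalizing i j k with
  | nil => exact hij.elim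
  | node _ A B ihA ihB =>
    simp only [decRelT] at hij hjk ⊢
    rcases hij with ⟨hi, hj, hA⟩ | ⟨hi, hj, hB⟩ | ⟨hj, hi, hi'⟩ <;>
      rcases hjk with ⟨hj', hk, hA'⟩ | ⟨hj', hk, hB'⟩ | ⟨hk, hj', hj''⟩ <;> try omega
    · exact Or.inl ⟨hi, hk, ihA hA hA'⟩
    · exact Or.inr (Or.inl ⟨hi, hk, ihB hB hB'⟩)
    · exact Or.inr (Or.inr ⟨hk, by omega, by have := decRelT_bounds hB; omega⟩)

theorem incRelT_trans (hij : incRelT T i j) (hjk : incRelT T j k) : incRelT T i k := by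
  induction T generalizing i j k with
  | nil => exact hij.elim
  | node _ A B ihA ihB =>
    simp only [incRelT] at hij hjk ⊢
    rcases hij with ⟨hi, hj, hA⟩ | ⟨hi, hj, hB⟩ | ⟨hj, hi, hi'⟩ <;>
      rcases hjk with ⟨hj', hk, hA'⟩ | ⟨hj', hk, hB'⟩ | ⟨hk, hj', hj''⟩ <;> try omega
    · exact Or.inl ⟨hi, hk, ihA hA hA'⟩
    · exact Or.inr (Or.inr ⟨hk, by have := incRelT_bounds hA; omega, hi⟩)
    · exact Or.inr (Or.inl ⟨hi, hk, ihB hB hB'⟩)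

theorem decRelT_of_lt_of_lt (hab : i < j) (hbc : j < k) (h : decRelT T k i) :
    decRelT T j i := by
  induction T generalizing i j k with
  | nil => exact h.elim
  | node _ A B ihA ihB =>
    simp only [decRelT] at h ⊢
    rcases h with ⟨hk, hi, hA⟩ | ⟨hk, hi, hB⟩ | ⟨rfl, hk, hk'⟩
    · exact Or.inl ⟨by omega, hi, ihA hab hbc hA⟩
    · exact Or.inr (Or.inl ⟨by omega, hi, ihB (by omega) (by omega) hB⟩)
    · omega

theorem incRelT_of_lt_of_lt (hab : i < j) (hbc : j < k) (h : incRelT T i k) :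
    incRelT T j k := by
  induction T generalizing i j k with
  | nil => exact h.elim
  | node _ A B ihA ihB =>
    simp only [incRelT] at h ⊢
    rcases h with ⟨hi, hk, hA⟩ | ⟨hi, hk, hB⟩ | ⟨rfl, hi, hi'⟩
    · exact Or.inl ⟨by omega, hk, ihA hab hbc hA⟩
    · exact Or.inr (Or.inl ⟨by omega, hk, ihB (by omega) (by omega) hB⟩)
    · omega

theorem not_incRelT_of_decRelT (h : decRelT T j i) : ¬incRelT T i j := by
  induction T generalizing i j with
  | nil => exact h.elim
  | node _ A B ihA ihB =>
    simp only [decRelT, incRelT] at h ⊢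
    rintro (⟨hi, hj, hA'⟩ | ⟨hi, hj, hB'⟩ | ⟨hj, hi, hi'⟩) <;>
      rcases h with ⟨hj', hi', hA⟩ | ⟨hj', hi', hB⟩ | ⟨hi', hj', hj''⟩ <;> try omega
    · exact ihA hA hA'
    · exact ihB hB hB'

theorem exists_incRelT_of_not_decRelT (hj : 1 ≤ j) (hji : j < i) (hi : i ≤ T.numNodes)
    (h : ¬decRelT T i j) : ∃ k, j < k ∧ k ≤ i ∧ incRelT T j k := by
  induction T generalizing i j with
  | nil => simp at hi; omega
  | node _ A B ihA ihB =>
    simp only [decRelT, BinaryTree.numNodes, not_or, not_and] at h hi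
    obtain ⟨hA, hB, hroot⟩ := h
    simp only [incRelT]
    rcases lt_trichotomy j (A.numNodes + 1) with hjA | rfl | hjB
    · by_cases hiA : i < A.numNodes + 1
      · obtain ⟨k, hjk, hki, hk⟩ := ihA hj hji (by omega) (hA hiA hjA)
        exact ⟨k, hjk, hki, Or.inl ⟨hjA, by omega, hk⟩⟩
      · exact ⟨A.numNodes + 1, hjA, by omega, Or.inr (Or.inr ⟨rfl, hj, hjA⟩)⟩
    · exact absurd (by omega) (hroot rfl (by omega))
    · obtain ⟨k, hjk, hki, hk⟩ := ihB (i := i - (A.numNodes + 1)) (by omega) (by omega)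
        (by omega) (hB (by omega) hjB)
      refine ⟨k + (A.numNodes + 1), by omega, by omega, Or.inr (Or.inl ⟨hjB, by omega, ?_⟩)⟩
      simpa using hk

end TreeRelations

section Restriction

variable {u : Unit} {A B : BinaryTree Unit} {i j : ℕ}

theorem decRelT_node_iff_of_le (hi : i ≤ A.numNodes) :
    decRelT (BinaryTree.node u A B) i j ↔ decRelT A i j := by
  simp only [decRelT]
  constructor
  · rintro (⟨-, -, h⟩ | ⟨h, -⟩ | ⟨-, h, -⟩) <;> first | exact h | omega
  · intro h
    have := decRelT_bounds h
    exact Or.inl ⟨by omega, by omega, h⟩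

theorem decRelT_node_add_iff (hj : 1 ≤ j) :
    decRelT (BinaryTree.node u A B) (A.numNodes + 1 + i) (A.numNodes + 1 + j) ↔
      decRelT B i j := by
  simp only [decRelT, Nat.add_sub_cancel_left]
  constructor
  · rintro (⟨h, -⟩ | ⟨-, -, h⟩ | ⟨h, -⟩) <;> first | exact h | omega
  · intro h
    have := decRelT_bounds h
    exact Or.inr (Or.inl ⟨by omega, by omega, h⟩)

theorem incRelT_node_iff_of_le (hj : j ≤ A.numNodes) :
    incRelT (BinaryTree.node u A B) i j ↔ incRelT A i j := by
  simp only [incRelT]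
  constructor
  · rintro (⟨-, -, h⟩ | ⟨-, h, -⟩ | ⟨h, -⟩) <;> first | exact h | omega
  · intro h
    have := incRelT_bounds h
    exact Or.inl ⟨by omega, by omega, h⟩

theorem incRelT_node_add_iff (hi : 1 ≤ i) :
    incRelT (BinaryTree.node u A B) (A.numNodes + 1 + i) (A.numNodes + 1 + j) ↔
      incRelT B i j := by
  simp only [incRelT, Nat.add_sub_cancel_left]
  constructor
  · rintro (⟨h, -⟩ | ⟨-, -, h⟩ | ⟨-, -, h⟩) <;> first | exact h | omega
  · intro h
    have := incRelT_bounds h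
    exact Or.inr (Or.inl ⟨by omega, by omega, h⟩)

end Restriction

theorem numNodes_left_le_of_decRelT_subset {u v : Unit} {A B A' B' : BinaryTree Unit}
    (hn : (BinaryTree.node u A B).numNodes = (BinaryTree.node v A' B').numNodes)
    (h : ∀ i j, decRelT (BinaryTree.node u A B) i j → decRelT (BinaryTree.node v A' B') i j) :
    A'.numNodes ≤ A.numNodes := by
  by_contra! hlt
  simp only [BinaryTree.numNodes] at hn
  have hroot := h (A.numNodes + B.numNodes + 1) (A.numNodes + 1)
    (Or.inr (Or.inr ⟨rfl, by omega, by omega⟩))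
  rcases hroot with ⟨-, -, h'⟩ | ⟨-, h', -⟩ | ⟨h', -⟩
  · have := decRelT_bounds h'; omega
  all_goals omega

theorem numNodes_left_le_of_incRelT_subset {u v : Unit} {A B A' B' : BinaryTree Unit}
    (h : ∀ i j, incRelT (BinaryTree.node u A B) i j → incRelT (BinaryTree.node v A' B') i j) :
    A.numNodes ≤ A'.numNodes := by
  by_contra! hlt
  have hroot := h 1 (A.numNodes + 1) (Or.inr (Or.inr ⟨rfl, le_rfl, by omega⟩))
  rcases hroot with ⟨-, -, h'⟩ | ⟨h', -⟩ | ⟨h', -⟩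
  · have := incRelT_bounds h'; omega
  all_goals omega

theorem eq_of_decRelT_iff : ∀ {T U : BinaryTree Unit}, T.numNodes = U.numNodes →
    (∀ i j, decRelT T i j ↔ decRelT U i j) → T = U
  | .nil, .nil, _, _ => rfl
  | .nil, .node .., hn, _ | .node .., .nil, hn, _ => by simp at hn
  | .node () A B, .node () A' B', hn, h => by
    have hA : A.numNodes = A'.numNodes :=
      le_antisymm (numNodes_left_le_of_decRelT_subset hn.symm fun i j => (h i j).2)
        (numNodes_left_le_of_decRelT_subset hn fun i j => (h i j).1)
    have hB : B.numNodes = B'.numNodes := by simp only [BinaryTree.numNodes] at hn; omega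
    have hAA : A = A' := eq_of_decRelT_iff hA fun i j => by
      by_cases hi : i ≤ A.numNodes
      · exact (decRelT_node_iff_of_le hi).symm.trans
          ((h i j).trans (decRelT_node_iff_of_le (hA ▸ hi)))
      · exact iff_of_false (fun h' => hi (decRelT_bounds h').2.2)
          (fun h' => hi (hA ▸ (decRelT_bounds h').2.2))
    have hBB : B = B' := eq_of_decRelT_iff hB fun i j => by
      by_cases hj : 1 ≤ j
      · have := h (A.numNodes + 1 + i) (A.numNodes + 1 + j)
        rwa [decRelT_node_add_iff hj, hA, decRelT_node_add_iff hj] at this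
      · exact iff_of_false (fun h' => hj (decRelT_bounds h').1)
          (fun h' => hj (decRelT_bounds h').1)
    rw [hAA, hBB]

theorem eq_of_incRelT_iff : ∀ {T U : BinaryTree Unit}, T.numNodes = U.numNodes →
    (∀ i j, incRelT T i j ↔ incRelT U i j) → T = U
  | .nil, .nil, _, _ => rfl
  | .nil, .node .., hn, _ | .node .., .nil, hn, _ => by simp at hn
  | .node () A B, .node () A' B', hn, h => by
    have hA : A.numNodes = A'.numNodes :=
      le_antisymm (numNodes_left_le_of_incRelT_subset fun i j => (h i j).1)
        (numNodes_left_le_of_incRelT_subset fun i j => (h i j).2)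
    have hB : B.numNodes = B'.numNodes := by simp only [BinaryTree.numNodes] at hn; omega
    have hAA : A = A' := eq_of_incRelT_iff hA fun i j => by
      by_cases hj : j ≤ A.numNodes
      · exact (incRelT_node_iff_of_le hj).symm.trans
          ((h i j).trans (incRelT_node_iff_of_le (hA ▸ hj)))
      · exact iff_of_false (fun h' => hj (incRelT_bounds h').2.2)
          (fun h' => hj (hA ▸ (incRelT_bounds h').2.2))
    have hBB : B = B' := eq_of_incRelT_iff hB fun i j => by
      by_cases hi : 1 ≤ i
      · have := h (A.numNodes + 1 + i) (A.numNodes + 1 + j)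
        rwa [incRelT_node_add_iff hi, hA, incRelT_node_add_iff hi] at this
      · exact iff_of_false (fun h' => hi (incRelT_bounds h').1)
          (fun h' => hi (incRelT_bounds h').1)
    rw [hAA, hBB]

theorem exists_decRelT_root {n : ℕ} (hn : 1 ≤ n) {D : ℕ → ℕ → Prop}
    (hD : ∀ i j, D i j → 1 ≤ j ∧ j < i ∧ i ≤ n)
    (htrans : ∀ i j k, D i j → D j k → D i k)
    (hconvex : ∀ a b c, a < b → b < c → D c a → D b a) :
    ∃ p, 1 ≤ p ∧ p ≤ n ∧ (∀ i, p < i → i ≤ n → D i p) ∧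
      ∀ i j, j < p → D i j → i < p := by
  classical
  -- the leftmost node whose right branch reaches `n`
  have hex : ∃ a, a = n ∨ D n a := ⟨n, Or.inl rfl⟩
  have hpn : Nat.find hex = n ∨ D n (Nat.find hex) := Nat.find_spec hex
  have hmin : ∀ a < Nat.find hex, ¬D n a := fun a ha h => Nat.find_min hex ha (Or.inr h)
  refine ⟨Nat.find hex, ?_, Nat.find_le (Or.inl rfl), fun i hpi hin => ?_, fun i j hj h => ?_⟩
  · rcases hpn with h | h
    · omega
    · exact (hD _ _ h).1
  · rcases hpn with h | h
    · omega
    · rcases hin.lt_or_eq with hin | rfl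
      exacts [hconvex _ _ _ hpi hin h, h]
  · by_contra! hi
    have hDp : D (Nat.find hex) j := by
      rcases hi.lt_or_eq with hi | rfl
      exacts [hconvex _ _ _ hj hi h, h]
    rcases hpn with hpn | hpn
    · exact hmin j hj (hpn ▸ hDp)
    · exact hmin j hj (htrans _ _ _ hpn hDp)

theorem exists_decRelT_eq (n : ℕ) (D : ℕ → ℕ → Prop)
    (hD : ∀ i j, D i j → 1 ≤ j ∧ j < i ∧ i ≤ n)
    (htrans : ∀ i j k, D i j → D j k → D i k)
    (hconvex : ∀ a b c, a < b → b < c → D c a → D b a) :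
    ∃ T : BinaryTree Unit, T.numNodes = n ∧ ∀ i j, decRelT T i j ↔ D i j := by
  induction n using Nat.strong_induction_on generalizing D with
  | _ n ih =>
  rcases Nat.eq_zero_or_pos n with rfl | hn
  · exact ⟨.nil, rfl, fun i j => iff_of_false id fun h => by have := hD i j h; omega⟩
  obtain ⟨p, hp1, hpn, hroot, hleft⟩ := exists_decRelT_root hn hD htrans hconvex
  obtain ⟨A, hA, hAD⟩ := ih (p - 1) (by omega) (fun i j => i < p ∧ D i j)
    (fun i j h => by have := hD i j h.2; omega)
    (fun i j k h h' => ⟨h.1, htrans _ _ _ h.2 h'.2⟩)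
    (fun a b c hab hbc h => ⟨by omega, hconvex _ _ _ hab hbc h.2⟩)
  obtain ⟨B, hB, hBD⟩ := ih (n - p) (by omega) (fun i j => 1 ≤ j ∧ D (p + i) (p + j))
    (fun i j h => by have := hD _ _ h.2; omega)
    (fun i j k h h' => ⟨h'.1, htrans _ _ _ h.2 h'.2⟩)
    (fun a b c hab hbc h => ⟨h.1, hconvex _ _ _ (by omega) (by omega) h.2⟩)
  refine ⟨.node () A B, by simp only [BinaryTree.numNodes]; omega, fun i j => ?_⟩
  have hAp : A.numNodes + 1 = p := by omega
  simp only [decRelT, hAD, hBD, hAp]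
  constructor
  · rintro (⟨-, -, -, h⟩ | ⟨hi, hj, -, h⟩ | ⟨rfl, hi, hin⟩)
    · exact h
    · rwa [Nat.add_sub_cancel' hi.le, Nat.add_sub_cancel' hj.le] at h
    · exact hroot i hi (by omega)
  · intro h
    obtain ⟨hj, hji, hin⟩ := hD i j h
    rcases lt_trichotomy j p with hjp | rfl | hjp
    · exact Or.inl ⟨hleft i j hjp h, hjp, hleft i j hjp h, h⟩
    · exact Or.inr (Or.inr ⟨rfl, hji, by omega⟩)
    · refine Or.inr (Or.inl ⟨by omega, hjp, by omega, ?_⟩)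
      rwa [Nat.add_sub_cancel' (by omega : p ≤ i), Nat.add_sub_cancel' hjp.le]

theorem exists_incRelT_root {n : ℕ} (hn : 1 ≤ n) {I : ℕ → ℕ → Prop}
    (hI : ∀ i j, I i j → 1 ≤ i ∧ i < j ∧ j ≤ n)
    (htrans : ∀ i j k, I i j → I j k → I i k)
    (hconvex : ∀ a b c, a < b → b < c → I a c → I b c) :
    ∃ p, 1 ≤ p ∧ p ≤ n ∧ (∀ i, 1 ≤ i → i < p → I i p) ∧
      ∀ i j, p < j → I i j → p < i := by
  classical
  -- the rightmost node whose left branch reaches `1`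
  set p := Nat.findGreatest (fun a => a = 1 ∨ I 1 a) n
  have hpn : p = 1 ∨ I 1 p :=
    Nat.findGreatest_spec (P := fun a => a = 1 ∨ I 1 a) (m := 1) hn (Or.inl rfl)
  have hmax : ∀ a, p < a → ¬I 1 a := fun a ha h =>
    Nat.findGreatest_is_greatest ha (hI 1 a h).2.2 (Or.inr h)
  refine ⟨p, Nat.le_findGreatest hn (Or.inl rfl), Nat.findGreatest_le n, fun i hi hip => ?_,
    fun i j hj h => ?_⟩
  · rcases hpn with h | h
    · omega
    · rcases hi.lt_or_eq with hi | rfl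
      exacts [hconvex _ _ _ hi hip h, h]
  · by_contra! hi
    have hIp : I p j := by
      rcases hi.lt_or_eq with hi | rfl
      exacts [hconvex _ _ _ hi hj h, h]
    rcases hpn with hpn | hpn
    · exact hmax j hj (hpn ▸ hIp)
    · exact hmax j hj (htrans _ _ _ hpn hIp)

theorem exists_incRelT_eq (n : ℕ) (I : ℕ → ℕ → Prop)
    (hI : ∀ i j, I i j → 1 ≤ i ∧ i < j ∧ j ≤ n)
    (htrans : ∀ i j k, I i j → I j k → I i k)
    (hconvex : ∀ a b c, a < b → b < c → I a c → I b c) :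
    ∃ T : BinaryTree Unit, T.numNodes = n ∧ ∀ i j, incRelT T i j ↔ I i j := by
  induction n using Nat.strong_induction_on generalizing I with
  | _ n ih =>
  rcases Nat.eq_zero_or_pos n with rfl | hn
  · exact ⟨.nil, rfl, fun i j => iff_of_false id fun h => by have := hI i j h; omega⟩
  obtain ⟨p, hp1, hpn, hroot, hright⟩ := exists_incRelT_root hn hI htrans hconvex
  obtain ⟨A, hA, hAI⟩ := ih (p - 1) (by omega) (fun i j => j < p ∧ I i j)
    (fun i j h => by have := hI i j h.2; omega)
    (fun i j k h h' => ⟨h'.1, htrans _ _ _ h.2 h'.2⟩)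
    (fun a b c hab hbc h => ⟨h.1, hconvex _ _ _ hab hbc h.2⟩)
  obtain ⟨B, hB, hBI⟩ := ih (n - p) (by omega) (fun i j => 1 ≤ i ∧ I (p + i) (p + j))
    (fun i j h => by have := hI _ _ h.2; omega)
    (fun i j k h h' => ⟨h.1, htrans _ _ _ h.2 h'.2⟩)
    (fun a b c hab hbc h => ⟨by omega, hconvex _ _ _ (by omega) (by omega) h.2⟩)
  refine ⟨.node () A B, by simp only [BinaryTree.numNodes]; omega, fun i j => ?_⟩
  have hAp : A.numNodes + 1 = p := by omega
  simp only [incRelT, hAI, hBI, hAp]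
  constructor
  · rintro (⟨-, -, -, h⟩ | ⟨hi, hj, -, h⟩ | ⟨rfl, hi, hip⟩)
    · exact h
    · rwa [Nat.add_sub_cancel' hi.le, Nat.add_sub_cancel' hj.le] at h
    · exact hroot i hi hip
  · intro h
    obtain ⟨hi, hij, hjn⟩ := hI i j h
    rcases lt_trichotomy j p with hjp | rfl | hjp
    · exact Or.inl ⟨by omega, hjp, hjp, h⟩
    · exact Or.inr (Or.inr ⟨rfl, hi, hij⟩)
    · have hpi := hright i j hjp h
      refine Or.inr (Or.inl ⟨hpi, hjp, by omega, ?_⟩)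
      rwa [Nat.add_sub_cancel' hpi.le, Nat.add_sub_cancel' hjp.le]

/-- The largest in-order label in the subtree rooted at the node labelled `i`; the identity
outside the labels `1, …, numNodes`. -/
def subtreeMax : BinaryTree Unit → ℕ → ℕ
  | .nil, i => i
  | .node _ A B, i =>
      if i ≤ A.numNodes then subtreeMax A i
      else if i = A.numNodes + 1 then A.numNodes + 1 + B.numNodes
      else A.numNodes + 1 + subtreeMax B (i - (A.numNodes + 1))

section SubtreeMax

variable {T U : BinaryTree Unit} {u : Unit} {A B : BinaryTree Unit} {i : ℕ}

theorem subtreeMax_node_of_le (h : i ≤ A.numNodes) :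
    subtreeMax (.node u A B) i = subtreeMax A i := by
  simp [subtreeMax, h]

theorem subtreeMax_node_root :
    subtreeMax (.node u A B) (A.numNodes + 1) = A.numNodes + 1 + B.numNodes := by
  simp [subtreeMax]

theorem subtreeMax_node_add (h : 1 ≤ i) :
    subtreeMax (.node u A B) (A.numNodes + 1 + i) = A.numNodes + 1 + subtreeMax B i := by
  simp only [subtreeMax]
  rw [if_neg (by omega), if_neg (by omega), Nat.add_sub_cancel_left]

theorem subtreeMax_zero (T : BinaryTree Unit) : subtreeMax T 0 = 0 := by
  induction T with
  | nil => rfl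
  | node _ A B ihA => rw [subtreeMax_node_of_le (Nat.zero_le _), ihA]

theorem subtreeMax_of_numNodes_lt (h : T.numNodes < i) : subtreeMax T i = i := by
  induction T generalizing i with
  | nil => rfl
  | node _ A B ihA ihB =>
    simp only [BinaryTree.numNodes] at h
    obtain ⟨k, rfl⟩ : ∃ k, i = A.numNodes + 1 + k := ⟨i - (A.numNodes + 1), by omega⟩
    rw [subtreeMax_node_add (by omega), ihB (by omega)]

theorem le_subtreeMax (T : BinaryTree Unit) (i : ℕ) : i ≤ subtreeMax T i := by
  induction T generalizing i with
  | nil => exact le_rfl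
  | node _ A B ihA ihB =>
    simp only [subtreeMax]
    split_ifs
    · exact ihA i
    · omega
    · have := ihB (i - (A.numNodes + 1)); omega

theorem subtreeMax_le_numNodes (h : i ≤ T.numNodes) : subtreeMax T i ≤ T.numNodes := by
  induction T generalizing i with
  | nil => exact h
  | node _ A B ihA ihB =>
    simp only [BinaryTree.numNodes] at h ⊢
    simp only [subtreeMax]
    split_ifs with h₁
    · have := ihA h₁; omega
    · omega
    · have := ihB (i := i - (A.numNodes + 1)) (by omega); omega

theorem decRelT_iff_subtreeMax {j : ℕ} : decRelT T i j ↔ j < i ∧ i ≤ subtreeMax T j := by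
  induction T generalizing i j with
  | nil => exact iff_of_false id (by simp only [subtreeMax]; omega)
  | node _ A B ihA ihB =>
    simp only [decRelT, subtreeMax, ihA, ihB]
    split_ifs with h₁ h₂
    · have := subtreeMax_le_numNodes h₁; omega
    · omega
    · omega

theorem subtreeMax_le_of_lt_of_le {a b : ℕ} (hab : a < b) (hb : b ≤ subtreeMax T a) :
    subtreeMax T b ≤ subtreeMax T a := by
  rcases (le_subtreeMax T b).lt_or_eq with hlt | heq
  · have := decRelT_trans (decRelT_iff_subtreeMax.2 ⟨hlt, le_rfl⟩)
      (decRelT_iff_subtreeMax.2 ⟨hab, hb⟩)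
    exact (decRelT_iff_subtreeMax.1 this).2
  · exact heq ▸ hb

theorem subtreeMax_le_iff_decRelT_subset :
    (∀ i, subtreeMax T i ≤ subtreeMax U i) ↔ ∀ i j, decRelT T i j → decRelT U i j := by
  simp only [decRelT_iff_subtreeMax]
  refine ⟨fun h i j hij => ⟨hij.1, hij.2.trans (h j)⟩, fun h i => ?_⟩
  rcases (le_subtreeMax T i).lt_or_eq with hlt | heq
  · exact (h _ i ⟨hlt, le_rfl⟩).2
  · exact heq ▸ le_subtreeMax U i

end SubtreeMax

section Rotation

open Function

theorem RightRot.numNodes_eq {T T' : BinaryTree Unit} (h : RightRot T T') :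
    T'.numNodes = T.numNodes := by
  induction h <;> simp only [BinaryTree.numNodes] at * <;> omega

theorem subtreeMax_rotate (A B C : BinaryTree Unit) :
    subtreeMax (.node () A (.node () B C)) =
      update (subtreeMax (.node () (.node () A B) C)) (A.numNodes + 1)
        (A.numNodes + B.numNodes + C.numNodes + 2) := by
  funext i
  simp only [subtreeMax, update_apply, BinaryTree.numNodes, Nat.sub_sub]
  split_ifs <;> grind

theorem subtreeMax_node_update_left {A A' B : BinaryTree Unit} {x v : ℕ}
    (hA : A'.numNodes = A.numNodes) (hx : x ≤ A.numNodes)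
    (h : subtreeMax A' = update (subtreeMax A) x v) :
    subtreeMax (.node () A' B) = update (subtreeMax (.node () A B)) x v := by
  funext i
  simp only [subtreeMax, h, hA, update_apply]
  split_ifs <;> omega

theorem subtreeMax_node_update_right {A B B' : BinaryTree Unit} {x v : ℕ}
    (hB : B'.numNodes = B.numNodes) (hx : 1 ≤ x)
    (h : subtreeMax B' = update (subtreeMax B) x v) :
    subtreeMax (.node () A B') =
      update (subtreeMax (.node () A B)) (A.numNodes + 1 + x) (A.numNodes + 1 + v) := by
  funext i
  simp only [subtreeMax, h, hB, update_apply]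
  split_ifs <;> omega

theorem RightRot.subtreeMax_le {T T' : BinaryTree Unit} (h : RightRot T T') (i : ℕ) :
    subtreeMax T i ≤ subtreeMax T' i := by
  induction h generalizing i with
  | root A B C =>
    change subtreeMax (.node () (.node () A B) C) i ≤ subtreeMax (.node () A (.node () B C)) i
    rw [subtreeMax_rotate, update_apply]
    split_ifs with hi
    · have := subtreeMax_le_numNodes (T := .node () (.node () A B) C) (i := i)
        (by simp only [BinaryTree.numNodes]; omega)
      simp only [BinaryTree.numNodes] at this
      omega
    · exact le_rfl
  | left B h ih =>
    simp only [subtreeMax, h.numNodes_eq]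
    split_ifs
    exacts [ih i, le_rfl, le_rfl]
  | right A h ih =>
    simp only [subtreeMax, h.numNodes_eq]
    split_ifs
    exacts [le_rfl, le_rfl, Nat.add_le_add_left (ih _) _]

theorem eq_root_of_subtreeMax_eq_numNodes {A B : BinaryTree Unit} {x : ℕ}
    (hx : subtreeMax (.node () A B) x = (BinaryTree.node () A B).numNodes)
    (hleft : ∀ a < x, subtreeMax (.node () A B) a ≠ subtreeMax (.node () A B) x) :
    x = A.numNodes + 1 := by
  simp only [BinaryTree.numNodes] at hx
  rcases lt_trichotomy x (A.numNodes + 1) with h | h | h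
  · have := subtreeMax_le_numNodes (T := A) (i := x) (by omega)
    rw [subtreeMax_node_of_le (by omega)] at hx
    omega
  · exact h
  · refine absurd ?_ (hleft _ h)
    rw [subtreeMax_node_root, hx]
    omega

theorem exists_rightRot_subtreeMax_eq_update {T : BinaryTree Unit} {x : ℕ} (hx : 1 ≤ x)
    (hxn : subtreeMax T x < T.numNodes)
    (hleft : ∀ a < x, subtreeMax T a ≠ subtreeMax T x) :
    ∃ T', RightRot T T' ∧
      subtreeMax T' = update (subtreeMax T) x (subtreeMax T (subtreeMax T x + 1)) := by
  induction T generalizing x with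
  | nil => exact absurd hxn (Nat.not_lt_zero _)
  | node u A B ihA ihB =>
    obtain rfl : u = () := rfl
    have hfx := le_subtreeMax (.node () A B) x
    simp only [BinaryTree.numNodes] at hxn
    rcases lt_trichotomy x (A.numNodes + 1) with hxA | rfl | hxB
    · have hTx : subtreeMax (.node () A B) x = subtreeMax A x := subtreeMax_node_of_le (by omega)
      rw [hTx] at hxn hfx hleft ⊢
      have hleftA : ∀ a < x, subtreeMax A a ≠ subtreeMax A x := fun a ha => by
        simpa only [subtreeMax_node_of_le (by omega : a ≤ A.numNodes)] using hleft a ha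
      rcases (subtreeMax_le_numNodes (T := A) (i := x) (by omega)).lt_or_eq with hlt | hAx
      · obtain ⟨A', hrot, hA'⟩ := ihA hx hlt hleftA
        refine ⟨.node () A' B, .left B hrot, ?_⟩
        rw [subtreeMax_node_update_left hrot.numNodes_eq (by omega) hA',
          subtreeMax_node_of_le (by omega)]
      · -- `x` is the root of `A`, so the rotation happens at the root of `T`
        cases A with
        | nil => simp only [BinaryTree.numNodes] at hxA; omega
        | node v A₁ B₁ =>
          obtain rfl : v = () := rfl
          obtain rfl := eq_root_of_subtreeMax_eq_numNodes hAx hleftA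
          refine ⟨.node () A₁ (.node () B₁ B), .root A₁ B₁ B, ?_⟩
          rw [subtreeMax_rotate, hAx, subtreeMax_node_root]
          congr 1
          simp only [BinaryTree.numNodes]
          omega
    · rw [subtreeMax_node_root] at hxn
      omega
    · obtain ⟨y, rfl⟩ : ∃ y, x = A.numNodes + 1 + y := ⟨x - (A.numNodes + 1), by omega⟩
      have hy : 1 ≤ y := by omega
      have hTy := subtreeMax_node_add (u := ()) (A := A) (B := B) hy
      rw [hTy] at hxn hleft ⊢
      obtain ⟨B', hrot, hB'⟩ := ihB hy (by omega) fun a ha => by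
        rcases Nat.eq_zero_or_pos a with rfl | ha0
        · have := le_subtreeMax B y
          rw [subtreeMax_zero]
          omega
        · have := hleft (A.numNodes + 1 + a) (by omega)
          rw [subtreeMax_node_add ha0] at this
          omega
      refine ⟨.node () A B', .right A hrot, ?_⟩
      rw [subtreeMax_node_update_right hrot.numNodes_eq hy hB',
        Nat.add_assoc _ (subtreeMax B y), subtreeMax_node_add (by omega)]

theorem exists_rightRot_of_subtreeMax_le {T U : BinaryTree Unit} (hn : T.numNodes = U.numNodes)
    (hle : ∀ i, subtreeMax T i ≤ subtreeMax U i)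
    (hne : ∃ a, subtreeMax T a ≠ subtreeMax U a) :
    ∃ T', RightRot T T' ∧ (∀ i, subtreeMax T' i ≤ subtreeMax U i) ∧
      ∃ x ≤ T.numNodes, subtreeMax T x < subtreeMax T' x := by
  classical
  -- rotate at the first label where the subtrees of `T` and `U` differ
  have hex : ∃ a, subtreeMax T a < subtreeMax U a :=
    let ⟨a, ha⟩ := hne
    ⟨a, (hle a).lt_of_ne ha⟩
  set x := Nat.find hex
  have hx : subtreeMax T x < subtreeMax U x := Nat.find_spec hex
  have hmin : ∀ a < x, subtreeMax T a = subtreeMax U a := fun a ha =>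
    (hle a).antisymm (not_lt.1 (Nat.find_min hex ha))
  have hx1 : 1 ≤ x := by
    by_contra! h
    rw [Nat.lt_one_iff.1 h, subtreeMax_zero, subtreeMax_zero] at hx
    exact lt_irrefl 0 hx
  have hxn : x ≤ U.numNodes := by
    by_contra! h
    rw [subtreeMax_of_numNodes_lt h, subtreeMax_of_numNodes_lt (hn ▸ h)] at hx
    exact lt_irrefl x hx
  have hUx := subtreeMax_le_numNodes hxn
  have hTx := le_subtreeMax T x
  obtain ⟨T', hrot, hT'⟩ :=
    exists_rightRot_subtreeMax_eq_update (T := T) hx1 (by omega) fun a ha h => by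
      have := subtreeMax_le_of_lt_of_le (T := U) ha (by rw [← hmin a ha]; omega)
      rw [← hmin a ha] at this
      omega
  -- the rotation raises `subtreeMax T x` to `subtreeMax T c`, still at most `subtreeMax U x`
  set c := subtreeMax T x + 1
  have hTc := le_subtreeMax T c
  have hcU : subtreeMax T c ≤ subtreeMax U x :=
    (hle c).trans (subtreeMax_le_of_lt_of_le (by omega) hx)
  refine ⟨T', hrot, fun i => ?_, x, hn ▸ hxn, ?_⟩
  · rw [hT', update_apply]
    split_ifs with hi
    exacts [hi ▸ hcU, hle i]
  · rw [hT', update_self]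
    omega

theorem tamariLE_of_subtreeMax_le {T U : BinaryTree Unit} (hn : T.numNodes = U.numNodes)
    (hle : ∀ i, subtreeMax T i ≤ subtreeMax U i) : tamariLE T U := by
  induction hΦ : ∑ a ∈ Finset.range (U.numNodes + 1), (subtreeMax U a - subtreeMax T a)
    using Nat.strong_induction_on generalizing T with
  | _ Φ ih =>
  by_cases hTU : ∀ a, subtreeMax T a = subtreeMax U a
  · obtain rfl : T = U :=
      eq_of_decRelT_iff hn fun i j => by simp only [decRelT_iff_subtreeMax, hTU]
    exact .refl
  obtain ⟨T', hrot, hT'U, x, hxn, hx⟩ :=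
    exists_rightRot_of_subtreeMax_le hn hle (not_forall.1 hTU)
  refine .head hrot (ih _ ?_ (hrot.numNodes_eq.trans hn) hT'U rfl)
  rw [← hΦ]
  refine Finset.sum_lt_sum (fun i _ => Nat.sub_le_sub_left (hrot.subtreeMax_le i) _)
    ⟨x, Finset.mem_range.2 (by omega), ?_⟩
  have := hT'U x
  omega

theorem tamariLE_iff_decRelT_subset {T U : BinaryTree Unit} :
    tamariLE T U ↔ T.numNodes = U.numNodes ∧ ∀ i j, decRelT T i j → decRelT U i j := by
  rw [← subtreeMax_le_iff_decRelT_subset]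
  refine ⟨fun h => ?_, fun h => tamariLE_of_subtreeMax_le h.1 h.2⟩
  induction h with
  | refl => exact ⟨rfl, fun i => le_rfl⟩
  | tail _ hrot ih =>
    exact ⟨ih.1.trans hrot.numNodes_eq.symm, fun i => (ih.2 i).trans (hrot.subtreeMax_le i)⟩

end Rotation

def intervalRel (T₁ T₂ : BinaryTree Unit) (i j : ℕ) : Prop :=
  decRelT T₁ i j ∨ incRelT T₂ i j

section IntervalRel

variable {T₁ T₂ : BinaryTree Unit} {a b c : ℕ}

theorem intervalRel_of_lt_of_lt_left (hab : a < b) (hbc : b < c) (h : intervalRel T₁ T₂ a c) :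
    intervalRel T₁ T₂ b c := by
  rcases h with h | h
  · have := decRelT_bounds h; omega
  · exact Or.inr (incRelT_of_lt_of_lt hab hbc h)

theorem intervalRel_of_lt_of_lt_right (hab : a < b) (hbc : b < c) (h : intervalRel T₁ T₂ c a) :
    intervalRel T₁ T₂ b a := by
  rcases h with h | h
  · exact Or.inl (decRelT_of_lt_of_lt hab hbc h)
  · have := incRelT_bounds h; omega

variable (hsub : ∀ i j, decRelT T₁ i j → decRelT T₂ i j)
include hsub

theorem intervalRel_asymm (hab : intervalRel T₁ T₂ a b) : ¬intervalRel T₁ T₂ b a := by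
  rintro (h | h) <;> rcases hab with h' | h'
  · have := decRelT_bounds h; have := decRelT_bounds h'; omega
  · exact not_incRelT_of_decRelT (hsub _ _ h) h'
  · exact not_incRelT_of_decRelT (hsub _ _ h') h
  · have := incRelT_bounds h; have := incRelT_bounds h'; omega

theorem intervalRel_trans (hab : intervalRel T₁ T₂ a b) (hbc : intervalRel T₁ T₂ b c) :
    a = c ∨ intervalRel T₁ T₂ a c := by
  rcases hab with hab | hab <;> rcases hbc with hbc | hbc
  · exact Or.inr (Or.inl (decRelT_trans hab hbc))
  · have := decRelT_bounds hab
    have := incRelT_bounds hbc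
    rcases lt_trichotomy a c with hac | rfl | hca
    · exact Or.inr (Or.inr (incRelT_of_lt_of_lt (by omega) hac hbc))
    · exact Or.inl rfl
    · exact absurd hbc (not_incRelT_of_decRelT (hsub _ _ (decRelT_of_lt_of_lt (by omega) hca hab)))
  · have := incRelT_bounds hab
    have := decRelT_bounds hbc
    rcases lt_trichotomy a c with hac | rfl | hca
    · exact absurd (incRelT_of_lt_of_lt hac (by omega) hab)
        (not_incRelT_of_decRelT (hsub _ _ hbc))
    · exact Or.inl rfl
    · exact Or.inr (Or.inl (decRelT_of_lt_of_lt hca (by omega) hbc))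
  · exact Or.inr (Or.inr (incRelT_trans hab hbc))

theorem reflTransGen_iff_eq_or_intervalRel {n : ℕ} (x y : Fin n) :
    ReflTransGen (fun x y : Fin n =>
        decRelT T₁ (x.1 + 1) (y.1 + 1) ∨ incRelT T₂ (x.1 + 1) (y.1 + 1)) x y ↔
      x = y ∨ intervalRel T₁ T₂ (x.1 + 1) (y.1 + 1) := by
  refine ⟨fun h => ?_, ?_⟩
  · induction h with
    | refl => exact Or.inl rfl
    | @tail y z _ hyz ih =>
      rcases ih with rfl | hxy
      · exact Or.inr hyz
      · rcases intervalRel_trans hsub hxy hyz with h | h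
        · exact Or.inl (Fin.ext (by omega))
        · exact Or.inr h
  · rintro (rfl | h)
    exacts [.refl, .single h]

theorem isIntervalRel_eq_or_intervalRel (n : ℕ) :
    IsIntervalRel n fun x y : Fin n => x = y ∨ intervalRel T₁ T₂ (x.1 + 1) (y.1 + 1) := by
  refine ⟨fun _ => Or.inl rfl, ?_, fun x y z hxy hyz => ?_, ?_, ?_⟩
  · rintro x y (rfl | hxy) hyx
    · rfl
    · exact (hyx.resolve_right (intervalRel_asymm hsub hxy)).symm
  · have e := reflTransGen_iff_eq_or_intervalRel (n := n) hsub
    exact (e x z).1 (((e x y).2 hxy).trans ((e y z).2 hyz))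
  · rintro x y z hxy hyz (rfl | hxz)
    · exact absurd (hxy.trans hyz) (lt_irrefl x)
    · exact Or.inr (intervalRel_of_lt_of_lt_left (by simpa using hxy) (by simpa using hyz) hxz)
  · rintro x y z hxy hyz (rfl | hzx)
    · exact absurd (hxy.trans hyz) (lt_irrefl _)
    · exact Or.inr (intervalRel_of_lt_of_lt_right (by simpa using hxy) (by simpa using hyz) hzx)

end IntervalRel

def liftRel {n : ℕ} (r : Fin n → Fin n → Prop) (i j : ℕ) : Prop :=
  ∃ x y : Fin n, x.1 + 1 = i ∧ y.1 + 1 = j ∧ r x y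

section LiftRel

variable {n : ℕ} {r : Fin n → Fin n → Prop} {i j k : ℕ}

theorem Fin.exists_val_add_one_eq (h₁ : 1 ≤ i) (h₂ : i ≤ n) : ∃ x : Fin n, x.1 + 1 = i :=
  ⟨⟨i - 1, by omega⟩, by simp only; omega⟩

theorem liftRel_iff {x y : Fin n} : liftRel r (x.1 + 1) (y.1 + 1) ↔ r x y := by
  refine ⟨fun ⟨x', y', hx, hy, h⟩ => ?_, fun h => ⟨x, y, rfl, rfl, h⟩⟩
  obtain rfl : x' = x := Fin.ext (by omega)
  obtain rfl : y' = y := Fin.ext (by omega)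
  exact h

variable (hr : IsIntervalRel n r)
include hr

theorem IsIntervalRel.liftRel_trans (hij : liftRel r i j) (hjk : liftRel r j k) :
    liftRel r i k := by
  obtain ⟨x, y, rfl, rfl, hxy⟩ := hij
  obtain ⟨y', z, hy, rfl, hyz⟩ := hjk
  obtain rfl : y' = y := Fin.ext (by omega)
  exact ⟨x, z, rfl, rfl, hr.2.2.1 x y' z hxy hyz⟩

theorem IsIntervalRel.liftRel_antisymm (hij : liftRel r i j) (hji : liftRel r j i) : i = j := by
  obtain ⟨x, y, rfl, rfl, hxy⟩ := hij
  rw [hr.2.1 x y hxy (liftRel_iff.1 hji)]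

theorem IsIntervalRel.liftRel_of_lt_of_lt_left (hij : i < j) (hjk : j < k) (h : liftRel r i k) :
    liftRel r j k := by
  obtain ⟨x, z, rfl, rfl, hxz⟩ := h
  obtain ⟨y, rfl⟩ := Fin.exists_val_add_one_eq (n := n) (i := j) (by omega) (by omega)
  exact liftRel_iff.2 (hr.2.2.2.1 x y z (Fin.lt_def.2 (by omega)) (Fin.lt_def.2 (by omega)) hxz)

theorem IsIntervalRel.liftRel_of_lt_of_lt_right (hij : i < j) (hjk : j < k) (h : liftRel r k i) :
    liftRel r j i := by
  obtain ⟨z, x, rfl, rfl, hzx⟩ := h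
  obtain ⟨y, rfl⟩ := Fin.exists_val_add_one_eq (n := n) (i := j) (by omega) (by omega)
  exact liftRel_iff.2 (hr.2.2.2.2 x y z (Fin.lt_def.2 (by omega)) (Fin.lt_def.2 (by omega)) hzx)

theorem IsIntervalRel.exists_trees : ∃ T₁ T₂ : BinaryTree Unit,
    T₁.numNodes = n ∧ T₂.numNodes = n ∧ (∀ i j, decRelT T₁ i j → decRelT T₂ i j) ∧
      ∀ x y : Fin n, r x y ↔ x = y ∨ intervalRel T₁ T₂ (x.1 + 1) (y.1 + 1) := by
  have bounds : ∀ {i j}, liftRel r i j → 1 ≤ i ∧ i ≤ n ∧ 1 ≤ j ∧ j ≤ n := by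
    rintro i j ⟨x, y, rfl, rfl, -⟩
    omega
  obtain ⟨T₁, h₁, hT₁⟩ := exists_decRelT_eq n (fun i j => j < i ∧ liftRel r i j)
    (fun i j h => by have := bounds h.2; omega)
    (fun i j k h h' => ⟨h'.1.trans h.1, hr.liftRel_trans h.2 h'.2⟩)
    (fun a b c hab hbc h => ⟨hab, hr.liftRel_of_lt_of_lt_right hab hbc h.2⟩)
  obtain ⟨T₂, h₂, hT₂⟩ := exists_incRelT_eq n (fun i j => i < j ∧ liftRel r i j)
    (fun i j h => by have := bounds h.2; omega)
    (fun i j k h h' => ⟨h.1.trans h'.1, hr.liftRel_trans h.2 h'.2⟩)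
    (fun a b c hab hbc h => ⟨hbc, hr.liftRel_of_lt_of_lt_left hab hbc h.2⟩)
  -- if `T₂` missed a decreasing relation `i ≺ j`, some `j < k ≤ i` would give `k ≺ j ≺ k`
  have hsub : ∀ i j, decRelT T₁ i j → decRelT T₂ i j := by
    intro i j h
    obtain ⟨hji, hij⟩ := (hT₁ i j).1 h
    obtain ⟨hj, -, hi⟩ := decRelT_bounds h
    by_contra hn
    obtain ⟨k, hjk, hki, hk⟩ := exists_incRelT_of_not_decRelT hj hji (h₂ ▸ h₁ ▸ hi) hn
    have hkj : liftRel r k j := by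
      rcases hki.lt_or_eq with hki | rfl
      exacts [hr.liftRel_of_lt_of_lt_right hjk hki hij, hij]
    have := hr.liftRel_antisymm ((hT₂ j k).1 hk).2 hkj
    omega
  refine ⟨T₁, T₂, h₁, h₂, hsub, fun x y => ?_⟩
  simp only [intervalRel, hT₁, hT₂, ← liftRel_iff (r := r) (x := x)]
  constructor
  · intro h
    rcases lt_trichotomy x y with hxy | rfl | hxy
    · exact Or.inr (Or.inr ⟨by simpa using hxy, h⟩)
    · exact Or.inl rfl
    · exact Or.inr (Or.inl ⟨by simpa using hxy, h⟩)
  · rintro (rfl | ⟨-, h⟩ | ⟨-, h⟩)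
    exacts [liftRel_iff.2 (hr.1 x), h, h]

end LiftRel

section Uniqueness

variable {n : ℕ} {r : Fin n → Fin n → Prop} {T₁ T₂ : BinaryTree Unit}

theorem decRelT_iff_liftRel (h₁ : T₁.numNodes = n)
    (hrel : ∀ x y : Fin n, r x y ↔ x = y ∨ intervalRel T₁ T₂ (x.1 + 1) (y.1 + 1))
    (i j : ℕ) :
    decRelT T₁ i j ↔ j < i ∧ liftRel r i j := by
  constructor
  · intro h
    obtain ⟨hj, hji, hi⟩ := decRelT_bounds h
    obtain ⟨x, rfl⟩ := Fin.exists_val_add_one_eq (n := n) (i := i) (by omega) (h₁ ▸ hi)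
    obtain ⟨y, rfl⟩ := Fin.exists_val_add_one_eq (n := n) (i := j) hj (by omega)
    exact ⟨hji, liftRel_iff.2 ((hrel x y).2 (Or.inr (Or.inl h)))⟩
  · rintro ⟨hji, x, y, rfl, rfl, hxy⟩
    rcases (hrel x y).1 hxy with rfl | h | h
    · omega
    · exact h
    · have := incRelT_bounds h; omega

theorem incRelT_iff_liftRel (h₂ : T₂.numNodes = n)
    (hrel : ∀ x y : Fin n, r x y ↔ x = y ∨ intervalRel T₁ T₂ (x.1 + 1) (y.1 + 1))
    (i j : ℕ) :
    incRelT T₂ i j ↔ i < j ∧ liftRel r i j := by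
  constructor
  · intro h
    obtain ⟨hi, hij, hj⟩ := incRelT_bounds h
    obtain ⟨x, rfl⟩ := Fin.exists_val_add_one_eq (n := n) (i := i) hi (by omega)
    obtain ⟨y, rfl⟩ := Fin.exists_val_add_one_eq (n := n) (i := j) (by omega) (h₂ ▸ hj)
    exact ⟨hij, liftRel_iff.2 ((hrel x y).2 (Or.inr (Or.inr h)))⟩
  · rintro ⟨hij, x, y, rfl, rfl, hxy⟩
    rcases (hrel x y).1 hxy with rfl | h | h
    · omega
    · have := decRelT_bounds h; omega
    · exact h

theorem eq_of_forall_iff_eq_or_intervalRel {U₁ U₂ : BinaryTree Unit}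
    (hT₁ : T₁.numNodes = n) (hT₂ : T₂.numNodes = n) (hU₁ : U₁.numNodes = n)
    (hU₂ : U₂.numNodes = n)
    (hT : ∀ x y : Fin n, r x y ↔ x = y ∨ intervalRel T₁ T₂ (x.1 + 1) (y.1 + 1))
    (hU : ∀ x y : Fin n, r x y ↔ x = y ∨ intervalRel U₁ U₂ (x.1 + 1) (y.1 + 1)) :
    T₁ = U₁ ∧ T₂ = U₂ :=
  ⟨eq_of_decRelT_iff (hT₁.trans hU₁.symm) fun i j =>
      (decRelT_iff_liftRel hT₁ hT i j).trans (decRelT_iff_liftRel hU₁ hU i j).symm,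
    eq_of_incRelT_iff (hT₂.trans hU₂.symm) fun i j =>
      (incRelT_iff_liftRel hT₂ hT i j).trans (incRelT_iff_liftRel hU₂ hU i j).symm⟩

end Uniqueness

/-- A finite poset on `{1,…,n}` is an interval-poset (arises from a Tamari
interval, as the poset generated by the decreasing relations of the lower tree
and the increasing relations of the upper tree) if and only if for all
`a < b < c`: `a ≺ c` implies `b ≺ c`, and `c ≺ a` implies `b ≺ a`; moreover the
correspondence with Tamari intervals is bijective. -/
theorem interval_poset_characterization (n : ℕ) (r : Fin n → Fin n → Prop) :
    IsIntervalRel n r ↔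
      ∃! p : Tree Unit × Tree Unit,
        p.1.numNodes = n ∧ p.2.numNodes = n ∧ tamariLE p.1 p.2 ∧
        ∀ i j : Fin n, r i j ↔
          Relation.ReflTransGen
            (fun x y : Fin n =>
              decRelT p.1 (x.1 + 1) (y.1 + 1) ∨ incRelT p.2 (x.1 + 1) (y.1 + 1))
            i j := by
  constructor
  · intro hr
    obtain ⟨T₁, T₂, h₁, h₂, hsub, hrel⟩ := hr.exists_trees
    have hle : tamariLE T₁ T₂ := tamariLE_iff_decRelT_subset.2 ⟨h₁.trans h₂.symm, hsub⟩
    refine ⟨(T₁, T₂), ⟨h₁, h₂, hle, fun x y =>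
      (hrel x y).trans (reflTransGen_iff_eq_or_intervalRel hsub x y).symm⟩, ?_⟩
    rintro ⟨U₁, U₂⟩ ⟨hU₁, hU₂, hU, hUrel⟩
    have hUsub := (tamariLE_iff_decRelT_subset.1 hU).2
    obtain ⟨rfl, rfl⟩ := eq_of_forall_iff_eq_or_intervalRel hU₁ hU₂ h₁ h₂
      (fun x y => (hUrel x y).trans (reflTransGen_iff_eq_or_intervalRel hUsub x y)) hrel
    rfl
  · rintro ⟨⟨T₁, T₂⟩, ⟨-, -, hle, hrel⟩, -⟩
    have hsub := (tamariLE_iff_decRelT_subset.1 hle).2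
    obtain rfl : r = fun x y => x = y ∨ intervalRel T₁ T₂ (x.1 + 1) (y.1 + 1) :=
      funext₂ fun x y => propext ((hrel x y).trans (reflTransGen_iff_eq_or_intervalRel hsub x y))
    exact isIntervalRel_eq_or_intervalRel hsub n
end

section
/- Every interval-poset I of size n is uniquely determined by a triple (I1, I2, r) where I1 and I2 are interval-posets with size(I1) + size(I2) + 1 = n and 0 ≤ r ≤ trees(I2), via the lower-contacts composition; i.e., the lower-contacts composition LC is a bijection from such triples to interval-posets of size n. -/
/-!
In an interval-poset `J` of size `n ≥ 1` exactly one vertex `k` is preceded by all smaller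
vertices and precedes no other vertex: the largest vertex preceded by all smaller ones. This is
the new vertex of any decomposition `J = LC(I₁, I₂, r)`, which forces `I₁` and `I₂` to be the
restrictions of `J` below and above `k`. By the interval property, the roots `s` of the final
forest of `I₂` with `s ≺ k` form an initial segment of the roots, and `r` is its length.
-/

/-- An interval-poset: a partial order on `{1,…,n}` such that for `a < b < c`,
`a ≺ c` implies `b ≺ c` and `c ≺ a` implies `b ≺ a`. -/
structure IPoset where
  n : ℕ
  rel : ℕ → ℕ → Prop
  supp : ∀ ⦃a b⦄, rel a b → 1 ≤ a ∧ a ≤ n ∧ 1 ≤ b ∧ b ≤ n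
  refl : ∀ a, 1 ≤ a → a ≤ n → rel a a
  antisymm : ∀ ⦃a b⦄, rel a b → rel b a → a = b
  trans : ∀ ⦃a b c⦄, rel a b → rel b c → rel a c
  inc : ∀ ⦃a b c⦄, a < b → b < c → rel a c → rel b c
  dec : ∀ ⦃a b c⦄, a < b → b < c → rel c a → rel b a

open scoped Classical in
/-- The initial rise `ir I`: the largest `k ≤ n` such that no relation
`i-1 ≺ i` holds for `2 ≤ i ≤ k`. -/
noncomputable def ir (I : IPoset) : ℕ :=
  Nat.findGreatest (fun k => ∀ i, 2 ≤ i → i ≤ k → ¬ I.rel (i - 1) i) I.n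

/-- `x` is a root of the final forest (the forest of decreasing relations) of `I`. -/
def IsDecRoot (I : IPoset) (x : ℕ) : Prop :=
  1 ≤ x ∧ x ≤ I.n ∧ ∀ y, y < x → ¬ I.rel x y

/-- `trees I`: the number of connected components of the final forest of `I`,
i.e. the number of its roots. -/
noncomputable def trees (I : IPoset) : ℕ := Set.ncard {x | IsDecRoot I x}

/-- The relation of the lower-contacts composition `LC(I₁, I₂, r)`: shifted
concatenation of `I₁`, a new vertex `k = n₁ + 1`, and `I₂`, where every vertex
of `I₁` precedes `k` and the vertices below one of the `r` smallest roots of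
the final forest of `I₂` precede `k`. -/
def LCrel (I1 I2 : IPoset) (r : ℕ) : ℕ → ℕ → Prop := fun x y =>
  let k := I1.n + 1
  (x ≤ I1.n ∧ y ≤ I1.n ∧ I1.rel x y) ∨
  (k < x ∧ k < y ∧ I2.rel (x - k) (y - k)) ∨
  (x = k ∧ y = k) ∨
  (y = k ∧ 1 ≤ x ∧ x ≤ I1.n) ∨
  (y = k ∧ k < x ∧ x ≤ k + I2.n ∧
    ∃ s, IsDecRoot I2 s ∧ Set.ncard {z | IsDecRoot I2 z ∧ z ≤ s} ≤ r ∧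
      (x - k = s ∨ (s < x - k ∧ I2.rel (x - k) s)))

theorem Set.Finite.ncard_sep_ncard_le {α : Type*} [LinearOrder α] {R : Set α} (hR : R.Finite)
    {r : ℕ} (hr : r ≤ R.ncard) : {s ∈ R | {z ∈ R | z ≤ s}.ncard ≤ r}.ncard = r := by
  obtain ⟨F, rfl⟩ := hR.exists_finset_coe
  clear hR
  -- Adding a new maximum `a` keeps the ranks of the old elements and gives `a` the top rank.
  induction F using Finset.induction_on_max generalizing r with
  | empty => simp_all
  | insert a S hlt ih =>
    rw [Finset.coe_insert] at hr ⊢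
    have hcard : (insert a (S : Set α)).ncard = S.card + 1 := by
      rw [Set.ncard_insert_of_notMem (fun h => (hlt a h).false), Set.ncard_coe_finset]
    have hbelow (s) (hs : s ∈ S) :
        {z ∈ insert a (S : Set α) | z ≤ s} = {z ∈ (S : Set α) | z ≤ s} := by
      ext z
      refine ⟨fun ⟨hz, hzs⟩ => ⟨hz.resolve_left ?_, hzs⟩, fun ⟨hz, hzs⟩ => ⟨Or.inr hz, hzs⟩⟩
      rintro rfl
      exact (hlt s hs).not_ge hzs
    have htop : {z ∈ insert a (S : Set α) | z ≤ a} = insert a (S : Set α) :=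
      Set.sep_eq_self_iff_mem_true.2 fun z hz => hz.elim le_of_eq fun hz => (hlt z hz).le
    rcases hr.lt_or_eq with hr | hr
    · convert ih (r := r) (by rw [Set.ncard_coe_finset]; omega) using 2
      ext s
      constructor
      · rintro ⟨rfl | hs, hle⟩
        · rw [htop] at hle
          omega
        · exact ⟨hs, hbelow s hs ▸ hle⟩
      · rintro ⟨hs, hle⟩
        exact ⟨Or.inr hs, (hbelow s hs).symm ▸ hle⟩
    · subst hr
      exact congrArg Set.ncard (Set.sep_eq_self_iff_mem_true.2 fun s _ =>
        Set.ncard_le_ncard (Set.sep_subset _ _) (Set.toFinite _))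

theorem Set.Finite.sep_ncard_le_ncard_eq {α : Type*} [LinearOrder α] {R A : Set α}
    (hR : R.Finite) (hAR : A ⊆ R) (hA : ∀ s ∈ R, ∀ t ∈ A, s ≤ t → s ∈ A) :
    {s ∈ R | {z ∈ R | z ≤ s}.ncard ≤ A.ncard} = A := by
  have hsub : A ⊆ {s ∈ R | {z ∈ R | z ≤ s}.ncard ≤ A.ncard} := fun t ht =>
    ⟨hAR ht, Set.ncard_le_ncard (fun s hs => hA s hs.1 t ht hs.2) (hR.subset hAR)⟩
  refine (Set.eq_of_subset_of_ncard_le hsub ?_ (hR.subset (Set.sep_subset _ _))).symm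
  exact (hR.ncard_sep_ncard_le (Set.ncard_le_ncard hAR hR)).le

namespace IPoset

variable (I : IPoset)

protected theorem ext {I J : IPoset} (hn : I.n = J.n) (hrel : ∀ x y, I.rel x y ↔ J.rel x y) :
    I = J := by
  cases I
  cases J
  obtain rfl : _ = _ := funext₂ fun x y => propext (hrel x y)
  cases hn
  rfl

theorem finite_setOf_isDecRoot : {x | IsDecRoot I x}.Finite :=
  (Set.finite_Icc 1 I.n).subset fun _ hx => ⟨hx.1, hx.2.1⟩

noncomputable def rootRank (s : ℕ) : ℕ := {z | IsDecRoot I z ∧ z ≤ s}.ncard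

theorem rootRank_mono : Monotone I.rootRank := fun _ _ h =>
  Set.ncard_le_ncard (fun _ hz => ⟨hz.1, hz.2.trans h⟩)
    (I.finite_setOf_isDecRoot.subset fun _ hz => hz.1)

theorem exists_isDecRoot_isLeast {m : ℕ} (hm : 1 ≤ m) (hmn : m ≤ I.n) :
    ∃ s, IsDecRoot I s ∧ s ≤ m ∧ IsLeast {y | I.rel m y} s := by
  classical
  have hex : ∃ y, I.rel m y := ⟨m, I.refl m hm hmn⟩
  have hleast : IsLeast {y | I.rel m y} (Nat.find hex) :=
    ⟨Nat.find_spec hex, fun _ hy => Nat.find_le hy⟩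
  have hsupp := I.supp hleast.1
  refine ⟨Nat.find hex, ⟨hsupp.2.2.1, hsupp.2.2.2, fun y hy hrel => ?_⟩,
    hleast.2 (I.refl m hm hmn), hleast⟩
  exact (hleast.2 (I.trans hleast.1 hrel)).not_gt hy

/-- `m` lies in one of the first `r` trees of the final forest. -/
def InFirstTrees (r m : ℕ) : Prop := ∃ s, IsDecRoot I s ∧ I.rootRank s ≤ r ∧ I.rel m s

variable {I} {r m m' : ℕ}

theorem InFirstTrees.bounds (h : I.InFirstTrees r m) : 1 ≤ m ∧ m ≤ I.n := by
  obtain ⟨s, -, -, hs⟩ := h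
  have := I.supp hs
  omega

theorem InFirstTrees.of_rel (hmm' : I.rel m m') (h : I.InFirstTrees r m') : I.InFirstTrees r m :=
  let ⟨s, hs, hrank, hrel⟩ := h
  ⟨s, hs, hrank, I.trans hmm' hrel⟩

theorem InFirstTrees.of_le (hm : 1 ≤ m) (hmm' : m ≤ m') (h : I.InFirstTrees r m') :
    I.InFirstTrees r m := by
  obtain hmm' | rfl := hmm'.lt_or_eq
  · obtain ⟨s, hs, hrank, hrel⟩ := h
    obtain hsm | hms := lt_or_ge s m
    · exact ⟨s, hs, hrank, I.dec hsm hmm' hrel⟩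
    obtain ⟨s', hs', hs'm, hleast⟩ :=
      I.exists_isDecRoot_isLeast hm (by have := I.supp hrel; omega)
    exact ⟨s', hs', (I.rootRank_mono (hs'm.trans hms)).trans hrank, hleast.1⟩
  · exact h

theorem inFirstTrees_iff_rootRank_le {s : ℕ} (hs : IsDecRoot I s) :
    I.InFirstTrees r s ↔ I.rootRank s ≤ r := by
  refine ⟨fun ⟨t, ht, hrank, hst⟩ => (I.rootRank_mono ?_).trans hrank,
    fun hrank => ⟨s, hs, hrank, I.refl s hs.1 hs.2.1⟩⟩
  by_contra! hts
  exact hs.2.2 t hts hst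

theorem inFirstTrees_iff_exists_tree (hm : 1 ≤ m) (hmn : m ≤ I.n) :
    I.InFirstTrees r m ↔ ∃ s, IsDecRoot I s ∧ I.rootRank s ≤ r ∧ (m = s ∨ (s < m ∧ I.rel m s)) := by
  constructor
  · rintro ⟨s, -, hrank, hrel⟩
    obtain ⟨s', hs', hs'm, hleast⟩ := I.exists_isDecRoot_isLeast hm hmn
    refine ⟨s', hs', (I.rootRank_mono (hleast.2 hrel)).trans hrank, ?_⟩
    obtain hlt | heq := hs'm.lt_or_eq
    exacts [Or.inr ⟨hlt, hleast.1⟩, Or.inl heq.symm]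
  · rintro ⟨s, hs, hrank, rfl | ⟨-, hrel⟩⟩
    exacts [⟨m, hs, hrank, I.refl m hm hmn⟩, ⟨s, hs, hrank, hrel⟩]

end IPoset

theorem LCrel_iff {I1 I2 : IPoset} {r x y : ℕ} :
    LCrel I1 I2 r x y ↔
      (x ≤ I1.n ∧ y ≤ I1.n ∧ I1.rel x y) ∨
      (I1.n + 1 < x ∧ I1.n + 1 < y ∧ I2.rel (x - (I1.n + 1)) (y - (I1.n + 1))) ∨
      (y = I1.n + 1 ∧ 1 ≤ x ∧ x ≤ I1.n + 1) ∨
      (y = I1.n + 1 ∧ I1.n + 1 < x ∧ I2.InFirstTrees r (x - (I1.n + 1))) := by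
  have hlast : (I1.n + 1 < x ∧ x ≤ I1.n + 1 + I2.n ∧ ∃ s, IsDecRoot I2 s ∧ I2.rootRank s ≤ r ∧
      (x - (I1.n + 1) = s ∨ (s < x - (I1.n + 1) ∧ I2.rel (x - (I1.n + 1)) s))) ↔
      I1.n + 1 < x ∧ I2.InFirstTrees r (x - (I1.n + 1)) := by
    constructor
    · rintro ⟨hx, hxn, h⟩
      exact ⟨hx, (I2.inFirstTrees_iff_exists_tree (by omega) (by omega)).2 h⟩
    · rintro ⟨hx, h⟩
      have := h.bounds
      exact ⟨hx, by omega, (I2.inFirstTrees_iff_exists_tree (by omega) (by omega)).1 h⟩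
  have hmiddle : (x = I1.n + 1 ∧ y = I1.n + 1) ∨ (y = I1.n + 1 ∧ 1 ≤ x ∧ x ≤ I1.n) ↔
      y = I1.n + 1 ∧ 1 ≤ x ∧ x ≤ I1.n + 1 := by
    omega
  simp only [LCrel, IPoset.rootRank] at hlast ⊢
  rw [hlast, ← hmiddle]
  simp only [or_assoc]

def LCposet (I1 I2 : IPoset) (r : ℕ) : IPoset where
  n := I1.n + I2.n + 1
  rel := LCrel I1 I2 r
  supp a b h := by
    rcases LCrel_iff.1 h with ⟨-, -, h⟩ | ⟨-, -, h⟩ | h | ⟨hb, -, h⟩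
    · have := I1.supp h; omega
    · have := I2.supp h; omega
    · omega
    · have := h.bounds; omega
  refl a ha han := LCrel_iff.2 <| by
    obtain hak | rfl | hak := lt_trichotomy a (I1.n + 1)
    · exact Or.inl ⟨by omega, by omega, I1.refl a ha (by omega)⟩
    · exact Or.inr (Or.inr (Or.inl ⟨rfl, ha, le_rfl⟩))
    · exact Or.inr (Or.inl ⟨hak, hak, I2.refl _ (by omega) (by omega)⟩)
  antisymm a b h h' := by
    rcases LCrel_iff.1 h with ⟨ha, hb, h⟩ | ⟨ha, hb, h⟩ | ⟨hb, ha, ha'⟩ | ⟨hb, ha, -⟩ <;>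
    rcases LCrel_iff.1 h' with ⟨hb', ha', h'⟩ | ⟨hb', ha', h'⟩ | ⟨ha', hb', hb''⟩ | ⟨ha', hb', -⟩ <;>
    first
      | exact I1.antisymm h h'
      | (have := I2.antisymm h h'; omega)
      | omega
  trans a b c h h' := LCrel_iff.2 <| by
    rcases LCrel_iff.1 h with ⟨ha, hb, h⟩ | ⟨ha, hb, h⟩ | ⟨hb, ha, ha'⟩ | ⟨hb, ha, h⟩ <;>
    rcases LCrel_iff.1 h' with ⟨hb', hc, h'⟩ | ⟨hb', hc, h'⟩ | ⟨hc, hb', hb''⟩ | ⟨hc, hb', h'⟩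
    all_goals first
      | (exfalso; omega)
      | exact Or.inl ⟨ha, hc, I1.trans h h'⟩
      | exact Or.inr (Or.inl ⟨ha, hc, I2.trans h h'⟩)
      | exact Or.inr (Or.inr (Or.inl ⟨hc, (I1.supp h).1, by omega⟩))
      | exact Or.inr (Or.inr (Or.inl ⟨hc, ha, ha'⟩))
      | exact Or.inr (Or.inr (Or.inr ⟨hc, ha, h⟩))
      | exact Or.inr (Or.inr (Or.inr ⟨hc, ha, h'.of_rel h⟩))
  inc a b c hab hbc h := LCrel_iff.2 <| by
    rcases LCrel_iff.1 h with ⟨-, hc, h⟩ | ⟨ha, hc, h⟩ | ⟨hc, ha, -⟩ | ⟨hc, hca, -⟩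
    · exact Or.inl ⟨by omega, hc, I1.inc hab hbc h⟩
    · exact Or.inr (Or.inl ⟨by omega, hc, I2.inc (by omega) (by omega) h⟩)
    · exact Or.inr (Or.inr (Or.inl ⟨hc, by omega, by omega⟩))
    · omega
  dec a b c hab hbc h := LCrel_iff.2 <| by
    rcases LCrel_iff.1 h with ⟨hc, ha, h⟩ | ⟨hc, ha, h⟩ | ⟨ha, -, hc⟩ | ⟨ha, hc, h⟩
    · exact Or.inl ⟨by omega, ha, I1.dec hab hbc h⟩
    · exact Or.inr (Or.inl ⟨by omega, ha, I2.dec (by omega) (by omega) h⟩)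
    · omega
    · exact Or.inr (Or.inr (Or.inr ⟨ha, by omega, h.of_le (by omega) (by omega)⟩))

namespace IPoset

variable (J : IPoset) (k : ℕ)

def lower : IPoset where
  n := min (k - 1) J.n
  rel x y := x < k ∧ y < k ∧ J.rel x y
  supp a b h := by have := J.supp h.2.2; omega
  refl a ha han := ⟨by omega, by omega, J.refl a ha (by omega)⟩
  antisymm a b h h' := J.antisymm h.2.2 h'.2.2
  trans a b c h h' := ⟨h.1, h'.2.1, J.trans h.2.2 h'.2.2⟩
  inc a b c hab hbc h := ⟨hbc.trans h.2.1, h.2.1, J.inc hab hbc h.2.2⟩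
  dec a b c hab hbc h := ⟨hbc.trans h.1, h.2.1, J.dec hab hbc h.2.2⟩

def upper : IPoset where
  n := J.n - k
  rel a b := 1 ≤ a ∧ 1 ≤ b ∧ J.rel (a + k) (b + k)
  supp a b h := by have := J.supp h.2.2; omega
  refl a ha han := ⟨ha, ha, J.refl (a + k) (by omega) (by omega)⟩
  antisymm a b h h' := by have := J.antisymm h.2.2 h'.2.2; omega
  trans a b c h h' := ⟨h.1, h'.2.1, J.trans h.2.2 h'.2.2⟩
  inc a b c hab hbc h := ⟨by omega, h.2.1, J.inc (by omega) (by omega) h.2.2⟩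
  dec a b c hab hbc h := ⟨by omega, h.2.1, J.dec (by omega) (by omega) h.2.2⟩

def lowerContacts : Set ℕ := {s | IsDecRoot (J.upper k) s ∧ J.rel (s + k) k}

/-- `k` can serve as the middle vertex of a lower-contacts composition giving `J`. -/
def IsLCVertex : Prop :=
  1 ≤ k ∧ k ≤ J.n ∧ (∀ i, 1 ≤ i → i < k → J.rel i k) ∧ ∀ y, J.rel k y → y = k

variable {J k}

theorem IsLCVertex.unique {k' : ℕ} (hk : J.IsLCVertex k) (hk' : J.IsLCVertex k') : k = k' := by
  obtain hlt | heq | hgt := lt_trichotomy k k'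
  · exact (hk.2.2.2 k' (hk'.2.2.1 k hk.1 hlt)).symm
  · exact heq
  · exact hk'.2.2.2 k (hk.2.2.1 k' hk'.1 hgt)

theorem exists_isLCVertex (hn : 1 ≤ J.n) : ∃ k, J.IsLCVertex k := by
  classical
  let P : ℕ → Prop := fun y => ∀ i, 1 ≤ i → i < y → J.rel i y
  have hP1 : P 1 := fun i hi hi' => absurd hi' (by omega)
  let k := Nat.findGreatest P J.n
  have hk : P k := Nat.findGreatest_spec hn hP1
  refine ⟨k, Nat.le_findGreatest hn hP1, Nat.findGreatest_le J.n, hk, fun y hky => ?_⟩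
  have hy := J.supp hky
  obtain hlt | heq | hgt := lt_trichotomy y k
  · exact J.antisymm (hk y hy.2.2.1 hlt) hky
  · exact heq
  · refine absurd (fun i hi hiy => ?_) (Nat.findGreatest_is_greatest hgt hy.2.2.2)
    obtain hik | rfl | hki := lt_trichotomy i k
    exacts [J.trans (hk i hi hik) hky, hky, J.inc hki hiy hky]

theorem lowerContacts_eq : J.lowerContacts k =
    {s | IsDecRoot (J.upper k) s ∧ (J.upper k).rootRank s ≤ (J.lowerContacts k).ncard} := by
  refine ((J.upper k).finite_setOf_isDecRoot.sep_ncard_le_ncard_eq (fun _ hs => hs.1) ?_).symm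
  rintro s hs t ⟨ht, htk⟩ hst
  refine ⟨hs, ?_⟩
  obtain hst | rfl := hst.lt_or_eq
  · exact J.dec (by have := hs.1; omega) (by omega) htk
  · exact htk

theorem rel_iff_inFirstTrees {x : ℕ} (hx : k < x) :
    J.rel x k ↔ (J.upper k).InFirstTrees (J.lowerContacts k).ncard (x - k) := by
  constructor
  · intro hxk
    have := J.supp hxk
    obtain ⟨s, hs, hsx, hleast⟩ :=
      (J.upper k).exists_isDecRoot_isLeast (m := x - k) (by omega) (by simp only [upper]; omega)
    have hsk : J.rel (s + k) k := by
      obtain hsx | rfl := hsx.lt_or_eq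
      · exact J.dec (by have := hs.1; omega) (by omega) hxk
      · rwa [Nat.sub_add_cancel hx.le]
    have hs' : s ∈ J.lowerContacts k := ⟨hs, hsk⟩
    rw [lowerContacts_eq] at hs'
    exact ⟨s, hs, hs'.2, hleast.1⟩
  · rintro ⟨s, hs, hrank, -, -, hxs⟩
    have hs' : s ∈ J.lowerContacts k := by
      rw [lowerContacts_eq]
      exact ⟨hs, hrank⟩
    rw [Nat.sub_add_cancel hx.le] at hxs
    exact J.trans hxs hs'.2

theorem rel_iff_LCrel (hk : J.IsLCVertex k) (x y : ℕ) :
    J.rel x y ↔ LCrel (J.lower k) (J.upper k) (J.lowerContacts k).ncard x y := by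
  obtain ⟨hk1, hkn, hbelow, hk_max⟩ := hk
  have hlower : (J.lower k).n + 1 = k := by simp only [lower]; omega
  rw [LCrel_iff, hlower]
  by_cases hy : y = k
  · subst y
    obtain hxk | hxk := le_or_gt x k
    · have : J.rel x k ↔ 1 ≤ x := by
        refine ⟨fun h => (J.supp h).1, fun hx => ?_⟩
        obtain hlt | rfl := hxk.lt_or_eq
        exacts [hbelow x hx hlt, J.refl x hx hkn]
      rw [this]
      constructor
      · exact fun hx => Or.inr (Or.inr (Or.inl ⟨rfl, hx, hxk⟩))
      · rintro (⟨-, h, -⟩ | ⟨-, h, -⟩ | ⟨-, h, -⟩ | ⟨-, h, -⟩) <;> omega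
    · rw [rel_iff_inFirstTrees hxk]
      constructor
      · exact fun h => Or.inr (Or.inr (Or.inr ⟨rfl, hxk, h⟩))
      · rintro (⟨-, h, -⟩ | ⟨-, h, -⟩ | ⟨-, -, h⟩ | ⟨-, -, h⟩)
        · omega
        · omega
        · omega
        · exact h
  · constructor
    · intro h
      have := J.supp h
      obtain hxk | rfl | hxk := lt_trichotomy x k
      · obtain hyk | rfl | hyk := lt_trichotomy y k
        · refine Or.inl ⟨?_, ?_, hxk, hyk, h⟩ <;> simp only [lower] <;> omega
        · exact absurd rfl hy
        · exact absurd (hk_max y (J.inc hxk hyk h)) hy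
      · exact absurd (hk_max y h) hy
      · obtain hyk | rfl | hyk := lt_trichotomy y k
        · exact absurd (hk_max y (J.dec hyk hxk h)) hy
        · exact absurd rfl hy
        · refine Or.inr (Or.inl ⟨hxk, hyk, by omega, by omega, ?_⟩)
          rwa [Nat.sub_add_cancel hxk.le, Nat.sub_add_cancel hyk.le]
    · rintro (⟨-, -, -, -, h⟩ | ⟨hxk, hyk, -, -, h⟩ | ⟨h, -⟩ | ⟨h, -⟩)
      · exact h
      · rwa [Nat.sub_add_cancel hxk.le, Nat.sub_add_cancel hyk.le] at h
      all_goals exact absurd h hy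

end IPoset

section LCposet

variable (I1 I2 : IPoset) (r : ℕ)

theorem isLCVertex_LCposet : (LCposet I1 I2 r).IsLCVertex (I1.n + 1) := by
  refine ⟨by omega, by simp only [LCposet]; omega, fun i hi hik => ?_, fun y hy => ?_⟩
  · exact LCrel_iff.2 (Or.inr (Or.inr (Or.inl ⟨rfl, hi, hik.le⟩)))
  · rcases LCrel_iff.1 hy with ⟨h, -⟩ | ⟨h, -⟩ | ⟨h, -⟩ | ⟨h, -⟩ <;> omega

theorem lower_LCposet : (LCposet I1 I2 r).lower (I1.n + 1) = I1 := by
  refine IPoset.ext (by simp only [IPoset.lower, LCposet]; omega) fun x y => ⟨?_, fun h => ?_⟩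
  · rintro ⟨hx, hy, h⟩
    rcases LCrel_iff.1 h with ⟨-, -, h⟩ | ⟨h, -⟩ | ⟨h, -⟩ | ⟨h, -⟩
    · exact h
    all_goals omega
  · have := I1.supp h
    exact ⟨by omega, by omega, LCrel_iff.2 (Or.inl ⟨this.2.1, this.2.2.2, h⟩)⟩

theorem upper_LCposet : (LCposet I1 I2 r).upper (I1.n + 1) = I2 := by
  refine IPoset.ext (by simp only [IPoset.upper, LCposet]; omega) fun x y => ⟨?_, fun h => ?_⟩
  · rintro ⟨hx, hy, h⟩
    rcases LCrel_iff.1 h with ⟨h, -⟩ | ⟨-, -, h⟩ | ⟨h, -⟩ | ⟨h, -⟩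
    · omega
    · simpa using h
    all_goals omega
  · have := I2.supp h
    refine ⟨this.1, this.2.2.1, LCrel_iff.2 (Or.inr (Or.inl ⟨by omega, by omega, ?_⟩))⟩
    simpa using h

theorem lowerContacts_LCposet : (LCposet I1 I2 r).lowerContacts (I1.n + 1) =
    {s | IsDecRoot I2 s ∧ I2.rootRank s ≤ r} := by
  ext s
  simp only [IPoset.lowerContacts, upper_LCposet, Set.mem_ofPred_eq]
  refine and_congr_right fun hs => ?_
  have := hs.1
  rw [← I2.inFirstTrees_iff_rootRank_le hs]
  constructor
  · intro h
    rcases LCrel_iff.1 h with ⟨h, -⟩ | ⟨-, h, -⟩ | ⟨-, -, h⟩ | ⟨-, -, h⟩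
    all_goals first | omega | simpa using h
  · intro h
    exact LCrel_iff.2 (Or.inr (Or.inr (Or.inr ⟨rfl, by omega, by simpa using h⟩)))

theorem ncard_lowerContacts_LCposet (hr : r ≤ trees I2) :
    ((LCposet I1 I2 r).lowerContacts (I1.n + 1)).ncard = r := by
  rw [lowerContacts_LCposet]
  exact I2.finite_setOf_isDecRoot.ncard_sep_ncard_le hr

end LCposet

/-- The lower-contacts composition is a bijection: every interval-poset `I` of
size `n ≥ 1` is uniquely determined by a triple `(I₁, I₂, r)` with
`size I₁ + size I₂ + 1 = n` and `0 ≤ r ≤ trees I₂`, via `I = LC(I₁, I₂, r)`. -/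
theorem lower_contacts_bijection (n : ℕ) (hn : 1 ≤ n) :
    (∀ I1 I2 : IPoset, ∀ r : ℕ, I1.n + I2.n + 1 = n → r ≤ trees I2 →
      ∃! J : IPoset, J.n = n ∧ ∀ x y, J.rel x y ↔ LCrel I1 I2 r x y) ∧
    (∀ J : IPoset, J.n = n →
      ∃! t : IPoset × IPoset × ℕ,
        t.1.n + t.2.1.n + 1 = n ∧ t.2.2 ≤ trees t.2.1 ∧
        ∀ x y, J.rel x y ↔ LCrel t.1 t.2.1 t.2.2 x y) := by
  refine ⟨fun I1 I2 r hsum _ => ?_, fun J hJ => ?_⟩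
  · refine ⟨LCposet I1 I2 r, ⟨hsum, fun _ _ => Iff.rfl⟩, fun J ⟨hJ, hrel⟩ => ?_⟩
    exact IPoset.ext (by rw [hJ, ← hsum]; rfl) hrel
  obtain ⟨k, hk⟩ := J.exists_isLCVertex (hJ ▸ hn)
  refine ⟨(J.lower k, J.upper k, (J.lowerContacts k).ncard), ⟨?_, ?_, J.rel_iff_LCrel hk⟩, ?_⟩
  · have := hk.1
    have := hk.2.1
    simp only [IPoset.lower, IPoset.upper]
    omega
  · exact Set.ncard_le_ncard (fun _ hs => hs.1) (J.upper k).finite_setOf_isDecRoot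
  rintro ⟨I1, I2, r⟩ ⟨hsum, hr, hrel⟩
  obtain rfl : J = LCposet I1 I2 r := IPoset.ext (by rw [hJ, ← hsum]; rfl) hrel
  obtain rfl : k = I1.n + 1 := hk.unique (isLCVertex_LCposet I1 I2 r)
  rw [lower_LCposet, upper_LCposet, ncard_lowerContacts_LCposet I1 I2 r hr]
end

section
/- If I = LC(I1, I2, r), then trees(I) = trees(I1) + 1 + trees(I2) - r. -/
/-! A decreasing relation of `LC(I₁, I₂, r)` lies inside the copy of `I₁` or of `I₂`, or goes
from a vertex of the copy of `I₂` down to the new vertex `k`. Hence the roots of its final forest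
are the roots of `I₁`, the vertex `k`, and the shifted roots of `I₂` except the `r` smallest ones,
which now point down to `k`; exactly `trees I₂ - r` roots of `I₂` have rank greater than `r`. -/

open Finset in
theorem Finset.card_filter_lt_card_filter_le {α : Type*} [LinearOrder α] (s : Finset α) (r : ℕ) :
    #{m ∈ s | r < #{z ∈ s | z ≤ m}} = #s - r := by
  induction s using Finset.induction_on_max with
  | empty => simp
  | insert a s ha ih =>
    have ha' : a ∉ s := fun h => lt_irrefl a (ha a h)
    have hrank : ∀ m ∈ s, #{z ∈ insert a s | z ≤ m} = #{z ∈ s | z ≤ m} := fun m hm => by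
      rw [filter_insert, if_neg (ha m hm).not_ge]
    have htop : #{z ∈ insert a s | z ≤ a} = #s + 1 := by
      rw [filter_insert, if_pos le_rfl, filter_true_of_mem fun z hz => (ha z hz).le,
        card_insert_of_notMem ha']
    rw [filter_insert, htop, filter_congr fun m hm => by rw [hrank m hm], card_insert_of_notMem ha']
    split_ifs
    · rw [card_insert_of_notMem fun hm => ha' (mem_filter.1 hm).1, ih]
      omega
    · omega

open Finset in
theorem Set.Finite.ncard_setOf_lt_ncard_le {α : Type*} [LinearOrder α] {s : Set α}
    (hs : s.Finite) (r : ℕ) : {m | m ∈ s ∧ r < {z | z ∈ s ∧ z ≤ m}.ncard}.ncard = s.ncard - r := by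
  lift s to Finset α using hs
  have hfilter (p : α → Prop) [DecidablePred p] :
      {x | x ∈ (s : Set α) ∧ p x}.ncard = #{x ∈ s | p x} := by
    rw [← Set.ncard_coe_finset, Finset.coe_filter]
    rfl
  simp only [hfilter, Set.ncard_coe_finset]
  exact s.card_filter_lt_card_filter_le r

theorem IPoset.finite_setOf_isDecRoot_s13 (I : IPoset) : {x | IsDecRoot I x}.Finite :=
  (Set.finite_Icc 1 I.n).subset fun _ hx => ⟨hx.1, hx.2.1⟩

def IPoset.upperRoots (I : IPoset) (r : ℕ) : Set ℕ :=
  {m | IsDecRoot I m ∧ r < {z | IsDecRoot I z ∧ z ≤ m}.ncard}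

theorem IPoset.ncard_upperRoots (I : IPoset) (r : ℕ) : (I.upperRoots r).ncard = trees I - r :=
  I.finite_setOf_isDecRoot_s13.ncard_setOf_lt_ncard_le r

section LowerContacts

variable {I1 I2 : IPoset} {r : ℕ}

theorem lcRel_iff_of_le {x y : ℕ} (hx : x ≤ I1.n) (hy : y < x) :
    LCrel I1 I2 r x y ↔ I1.rel x y := by
  constructor
  · rintro (⟨-, -, h⟩ | ⟨h, -⟩ | ⟨h, -⟩ | ⟨h, -⟩ | ⟨h, -⟩) <;> first | exact h | omega
  · exact fun h => Or.inl ⟨hx, by omega, h⟩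

theorem not_lcRel_new_vertex {y : ℕ} (hy : y < I1.n + 1) : ¬ LCrel I1 I2 r (I1.n + 1) y := by
  rintro (⟨h, -⟩ | ⟨h, -⟩ | ⟨-, h⟩ | ⟨h, -⟩ | ⟨h, -⟩) <;> omega

variable {J : IPoset} (hn : J.n = I1.n + I2.n + 1) (hrel : ∀ x y, J.rel x y ↔ LCrel I1 I2 r x y)
include hn hrel

theorem isDecRoot_lowerContacts_iff_of_le {x : ℕ} (hx : x ≤ I1.n) :
    IsDecRoot J x ↔ IsDecRoot I1 x :=
  and_congr_right fun _ => and_congr (iff_of_true (by omega) hx)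
    (forall₂_congr fun y hy => not_congr ((hrel x y).trans (lcRel_iff_of_le hx hy)))

theorem isDecRoot_lowerContacts_new_vertex : IsDecRoot J (I1.n + 1) :=
  ⟨by omega, by omega, fun _ hy h => not_lcRel_new_vertex hy ((hrel _ _).1 h)⟩

theorem isDecRoot_lowerContacts_add_iff {m : ℕ} (hm : 0 < m) :
    IsDecRoot J (I1.n + 1 + m) ↔ m ∈ I2.upperRoots r := by
  have hsub : I1.n + 1 + m - (I1.n + 1) = m := Nat.add_sub_cancel_left _ _
  constructor
  · rintro ⟨-, hle, hroot⟩
    have hroot2 : IsDecRoot I2 m := by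
      refine ⟨hm, by omega, fun y hy hI => hroot (I1.n + 1 + y) (by omega) ((hrel _ _).2 ?_)⟩
      have := (I2.supp hI).2.2.1
      exact Or.inr (Or.inl ⟨by omega, by omega, by simpa [hsub] using hI⟩)
    refine ⟨hroot2, lt_of_not_ge fun hrank => hroot (I1.n + 1) (by omega) ((hrel _ _).2 ?_)⟩
    exact Or.inr (Or.inr (Or.inr (Or.inr
      ⟨rfl, by omega, by omega, m, hroot2, by simpa [hsub], by simp⟩)))
  · rintro ⟨⟨-, hle, hroot⟩, hrank⟩
    refine ⟨by omega, by omega, fun y hy hJ => ?_⟩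
    rcases (hrel _ _).1 hJ with ⟨h, -⟩ | ⟨-, hy', hI⟩ | ⟨h, -⟩ | ⟨-, -, h⟩ |
      ⟨-, -, -, s, -, hsr, rfl | ⟨hsm, hI⟩⟩
    · omega
    · rw [hsub] at hI; exact hroot _ (by omega) hI
    · omega
    · omega
    · rw [hsub] at hsr; omega
    · rw [hsub] at hsm hI; exact hroot s hsm hI

theorem setOf_isDecRoot_lowerContacts :
    {x | IsDecRoot J x} =
      {x | IsDecRoot I1 x} ∪ insert (I1.n + 1) ((I1.n + 1 + ·) '' I2.upperRoots r) := by
  ext x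
  simp only [Set.mem_ofPred_eq, Set.mem_union, Set.mem_insert_iff, Set.mem_image]
  rcases lt_trichotomy x (I1.n + 1) with hx | rfl | hx
  · rw [isDecRoot_lowerContacts_iff_of_le hn hrel (by omega)]
    refine ⟨Or.inl, ?_⟩
    rintro (h | h | ⟨m, -, rfl⟩)
    exacts [h, absurd h hx.ne, by omega]
  · exact iff_of_true (isDecRoot_lowerContacts_new_vertex hn hrel) (Or.inr (Or.inl rfl))
  · obtain ⟨m, rfl⟩ := Nat.exists_eq_add_of_lt hx
    rw [add_assoc, isDecRoot_lowerContacts_add_iff hn hrel (by omega)]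
    constructor
    · exact fun h => Or.inr (Or.inr ⟨m + 1, h, rfl⟩)
    · rintro (h | h | ⟨m', h, hm'⟩)
      · exact absurd h.2.1 (by omega)
      · omega
      · rwa [← Nat.add_left_cancel hm']

theorem trees_lowerContacts_eq : trees J = trees I1 + 1 + (I2.upperRoots r).ncard := by
  have hdisj :
      Disjoint {x | IsDecRoot I1 x} (insert (I1.n + 1) ((I1.n + 1 + ·) '' I2.upperRoots r)) := by
    refine Set.disjoint_left.2 ?_
    rintro x ⟨-, hx, -⟩ (rfl | ⟨m, -, rfl⟩)
    · omega
    · simp only at hx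
      omega
  have hfin : ((I1.n + 1 + ·) '' I2.upperRoots r).Finite :=
    (I2.finite_setOf_isDecRoot_s13.subset fun _ hm => hm.1).image _
  rw [trees, setOf_isDecRoot_lowerContacts hn hrel,
    Set.ncard_union_eq hdisj I1.finite_setOf_isDecRoot_s13 (hfin.insert _),
    Set.ncard_insert_of_notMem (by simp [IPoset.upperRoots, IsDecRoot]) hfin,
    Set.ncard_image_of_injective _ (add_right_injective _), trees, add_assoc, add_comm 1]

end LowerContacts

/-- If `I = LC(I₁, I₂, r)`, then `trees I = trees I₁ + 1 + trees I₂ - r`. -/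
theorem trees_of_lower_contacts (I1 I2 J : IPoset) (r : ℕ) (hr : r ≤ trees I2)
    (hn : J.n = I1.n + I2.n + 1)
    (hrel : ∀ x y, J.rel x y ↔ LCrel I1 I2 r x y) :
    trees J = trees I1 + 1 + trees I2 - r := by
  rw [trees_lowerContacts_eq hn hrel, I2.ncard_upperRoots r]
  omega
end
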